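/- arXiv:hep-th/9507047 — 6 statements merged into one kernel-verified Lean document; each statement's English description precedes it below -/
import Mathlib

section
/- Let K be a complex Hilbert space and let A, B be bounded positive operators on K. Then the square of the Hilbert-Schmidt norm of A^{1/2} - B^{1/2} is bounded by the trace norm of A - B: ‖A^{1/2} - B^{1/2}‖₂² ≤ ‖A - B‖₁. -/
open scoped ENNReal InnerProductSpace

/-- The (squared) Hilbert–Schmidt norm of an operator, computed in a Hilbert basis
(as a value in `ℝ≥0∞`; it is independent of the basis). -/
noncomputable def hsNormSq {K : Type*} [NormedAddCommGroup K] [InnerProductSpace ℂ K]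
    {ι : Type*} (b : HilbertBasis ι ℂ K) (T : K →L[ℂ] K) : ℝ≥0∞ :=
  ∑' i, ENNReal.ofReal (‖T (b i)‖ ^ 2)

/-- The trace of a (positive) operator, computed in a Hilbert basis
(as a value in `ℝ≥0∞`; for positive operators it is independent of the basis). -/
noncomputable def traceVia {K : Type*} [NormedAddCommGroup K] [InnerProductSpace ℂ K]
    {ι : Type*} (b : HilbertBasis ι ℂ K) (T : K →L[ℂ] K) : ℝ≥0∞ :=
  ∑' i, ENNReal.ofReal (⟪b i, T (b i)⟫_ℂ).re

/-!
Put `S = A^{1/2} - B^{1/2}` and `T = A^{1/2} + B^{1/2}`. Then `S ≤ T`, `-S ≤ T` and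
`ST + TS = 2(A - B) = 2(P - N)`, where `P, N` are the positive and negative parts of `A - B`,
so `‖A - B‖₁ = Tr P + Tr N`.

Let `u` cut the spectrum of `S` down to `(δ, ∞)`, and let `G = (√t u)(S)`, so that
`GSG = (S u(S))²`. The identity `(S + ¼)T(S + ¼) - (S - ¼)T(S - ¼) = P - N`, conjugated by
`u(S)` and traced, becomes `Tr(GTG) + Tr(u N u) = Tr(u P u)` after moving `√T` across with
`Tr(X* T X) = Tr(√T X X* √T)`; hence `Tr (S u(S))² ≤ Tr(GTG) ≤ Tr P`. Cancelling the common
term needs `Tr(u T u) < ∞`, which comes from a discrete Lyapunov argument with `V = 1 - εS`: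
`T - VTV ≤ 2εP`, and `Vᵏ u(S)` decays geometrically. Doing the same for `-S` and letting
`δ → 0` gives `Tr S² ≤ Tr P + Tr N`.
-/

section Trace

open ContinuousLinearMap Filter Topology

variable {K : Type*} [NormedAddCommGroup K] [InnerProductSpace ℂ K]
  {ι κ : Type*} (b : HilbertBasis ι ℂ K)

lemma re_inner_apply_nonneg {T : K →L[ℂ] K} (hT : 0 ≤ T) (x : K) : 0 ≤ (⟪x, T x⟫_ℂ).re :=
  ((nonneg_iff_isPositive T).mp hT).re_inner_nonneg_right x

lemma re_inner_apply_le_of_le {T₁ T₂ : K →L[ℂ] K} (h : T₁ ≤ T₂) (x : K) :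
    (⟪x, T₁ x⟫_ℂ).re ≤ (⟪x, T₂ x⟫_ℂ).re := by
  have := ((le_def T₁ T₂).mp h).re_inner_nonneg_right x
  rw [sub_apply, inner_sub_right, map_sub] at this
  exact sub_nonneg.mp this

lemma hsNormSq_mul_le (C x : K →L[ℂ] K) :
    hsNormSq b (C * x) ≤ ENNReal.ofReal (‖C‖ ^ 2) * hsNormSq b x := by
  rw [hsNormSq, hsNormSq, ← ENNReal.tsum_mul_left]
  refine ENNReal.tsum_le_tsum fun i => ?_
  rw [← ENNReal.ofReal_mul (by positivity), ← mul_pow]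
  gcongr
  exact C.le_opNorm _

lemma traceVia_mono {T₁ T₂ : K →L[ℂ] K} (h : T₁ ≤ T₂) :
    traceVia b T₁ ≤ traceVia b T₂ :=
  ENNReal.tsum_le_tsum fun i => ENNReal.ofReal_le_ofReal (re_inner_apply_le_of_le h (b i))

lemma traceVia_add {T₁ T₂ : K →L[ℂ] K} (h₁ : 0 ≤ T₁) (h₂ : 0 ≤ T₂) :
    traceVia b (T₁ + T₂) = traceVia b T₁ + traceVia b T₂ := by
  simp only [traceVia, ← ENNReal.tsum_add, add_apply, inner_add_right, Complex.add_re]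
  exact tsum_congr fun i =>
    ENNReal.ofReal_add (re_inner_apply_nonneg h₁ _) (re_inner_apply_nonneg h₂ _)

lemma traceVia_smul (T : K →L[ℂ] K) {r : ℝ} (hr : 0 ≤ r) :
    traceVia b (r • T) = ENNReal.ofReal r * traceVia b T := by
  simp only [traceVia, ← ENNReal.tsum_mul_left, smul_apply, ← ENNReal.ofReal_mul hr,
    RCLike.real_smul_eq_coe_smul (K := ℂ), inner_smul_right]
  simp [Complex.mul_re]

lemma hsNormSq_eq_tsum_tsum (c : HilbertBasis κ ℂ K) (x : K →L[ℂ] K) :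
    hsNormSq b x = ∑' i, ∑' j, ENNReal.ofReal (‖⟪c j, x (b i)⟫_ℂ‖ ^ 2) := by
  refine tsum_congr fun i => ?_
  have h := (c.hasSum_inner_mul_inner (x (b i)) (x (b i))).mapL Complex.reCLM
  simp only [Complex.reCLM_apply, ← inner_conj_symm (x (b i)) (c _), Complex.conj_mul'] at h
  norm_cast at h
  rw [show (⟪x (b i), x (b i)⟫_ℂ).re = ‖x (b i)‖ ^ 2 from inner_self_eq_norm_sq (𝕜 := ℂ) _] at h
  rw [← h.tsum_eq, ENNReal.ofReal_tsum_of_nonneg (fun j => by positivity) h.summable]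

variable [CompleteSpace K]

lemma traceVia_sum {T : ℕ → K →L[ℂ] K} (hT : ∀ k, 0 ≤ T k) (n : ℕ) :
    traceVia b (∑ k ∈ Finset.range n, T k) = ∑ k ∈ Finset.range n, traceVia b (T k) := by
  induction n with
  | zero => simp [traceVia]
  | succ n ih =>
    rw [Finset.sum_range_succ, Finset.sum_range_succ,
      traceVia_add b (Finset.sum_nonneg fun k _ => hT k) (hT n), ih]

lemma re_inner_star_mul_self_apply (x : K →L[ℂ] K) (v : K) :
    (⟪v, (star x * x) v⟫_ℂ).re = ‖x v‖ ^ 2 := by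
  rw [star_eq_adjoint, mul_apply_eq_comp, adjoint_inner_right, inner_self_eq_norm_sq_to_K]
  norm_cast

lemma traceVia_star_mul_self (x : K →L[ℂ] K) : traceVia b (star x * x) = hsNormSq b x :=
  tsum_congr fun i => by rw [re_inner_star_mul_self_apply]

lemma hsNormSq_star (c : HilbertBasis κ ℂ K) (x : K →L[ℂ] K) :
    hsNormSq b (star x) = hsNormSq c x := by
  rw [hsNormSq_eq_tsum_tsum b c, hsNormSq_eq_tsum_tsum c b, ENNReal.tsum_comm]
  refine tsum_congr fun i => tsum_congr fun j => ?_
  rw [star_eq_adjoint, adjoint_inner_right, ← norm_inner_symm]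

lemma traceVia_star_mul_mul {T : K →L[ℂ] K} (hT : 0 ≤ T) (C : K →L[ℂ] K) :
    traceVia b (star C * T * C) = hsNormSq b (star C * CFC.sqrt T) := by
  have hs : star (CFC.sqrt T) = CFC.sqrt T := (IsSelfAdjoint.of_nonneg (CFC.sqrt_nonneg T)).star_eq
  have hC : star C * CFC.sqrt T = star (CFC.sqrt T * C) := by rw [star_mul, hs]
  calc traceVia b (star C * T * C)
      = traceVia b (star (CFC.sqrt T * C) * (CFC.sqrt T * C)) := by
        rw [← hC]; conv_lhs => rw [← CFC.sqrt_mul_sqrt_self T hT]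
        simp only [mul_assoc]
    _ = hsNormSq b (star C * CFC.sqrt T) := by
        rw [traceVia_star_mul_self, hC, hsNormSq_star]

lemma traceVia_eq_hsNormSq_sqrt {T : K →L[ℂ] K} (hT : 0 ≤ T) :
    traceVia b T = hsNormSq b (CFC.sqrt T) := by
  simpa using traceVia_star_mul_mul b hT 1

lemma traceVia_eq_of_nonneg (c : HilbertBasis κ ℂ K) {T : K →L[ℂ] K} (hT : 0 ≤ T) :
    traceVia b T = traceVia c T := by
  rw [traceVia_eq_hsNormSq_sqrt b hT, traceVia_eq_hsNormSq_sqrt c hT, ← hsNormSq_star b c,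
    (IsSelfAdjoint.of_nonneg (CFC.sqrt_nonneg T)).star_eq]

lemma traceVia_star_mul_mul_le {T : K →L[ℂ] K} (hT : 0 ≤ T) (C : K →L[ℂ] K) :
    traceVia b (star C * T * C) ≤ ENNReal.ofReal (‖C‖ ^ 2) * traceVia b T := by
  rw [traceVia_star_mul_mul b hT, traceVia_eq_hsNormSq_sqrt b hT, ← norm_star C]
  exact hsNormSq_mul_le b _ _

lemma traceVia_star_mul_mul_le_of_norm_le_one {T C : K →L[ℂ] K} (hT : 0 ≤ T) (hC : ‖C‖ ≤ 1) :
    traceVia b (star C * T * C) ≤ traceVia b T := by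
  refine (traceVia_star_mul_mul_le b hT C).trans (mul_le_of_le_one_left' ?_)
  rw [ENNReal.ofReal_le_one]
  nlinarith [norm_nonneg C]

lemma traceVia_star_mul_mul_mul_le {T : K →L[ℂ] K} (hT : 0 ≤ T) (U W : K →L[ℂ] K) :
    traceVia b (star (U * W) * T * (U * W))
      ≤ ENNReal.ofReal (‖W‖ ^ 2) * traceVia b (star U * T * U) := by
  rw [star_mul, show star W * star U * T * (U * W) = star W * (star U * T * U) * W by noncomm_ring]
  exact traceVia_star_mul_mul_le b (star_left_conjugate_nonneg hT U) W

lemma norm_star_apply_sq (X : K →L[ℂ] K) (v : K) :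
    ‖star X v‖ ^ 2 = (⟪v, (X * star X) v⟫_ℂ).re := by
  rw [← re_inner_star_mul_self_apply, star_star]

lemma traceVia_star_mul_mul_add {T X Y Z : K →L[ℂ] K} (hT : 0 ≤ T)
    (h : X * star X = Y * star Y + Z * star Z) :
    traceVia b (star X * T * X) = traceVia b (star Y * T * Y) + traceVia b (star Z * T * Z) := by
  simp only [traceVia_star_mul_mul b hT, hsNormSq, ← ENNReal.tsum_add]
  refine tsum_congr fun i => ?_
  rw [← ENNReal.ofReal_add (by positivity) (by positivity)]
  simp only [mul_apply_eq_comp _ (CFC.sqrt T), norm_star_apply_sq, h, add_apply, inner_add_right,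
    Complex.add_re]

lemma traceVia_le_of_tendsto {α : Type*} {l : Filter α} [l.NeBot] {R : α → K →L[ℂ] K}
    {X : K →L[ℂ] K} (hR : Tendsto R l (𝓝 X)) {c : ℝ≥0∞}
    (h : ∀ᶠ a in l, traceVia b (R a) ≤ c) : traceVia b X ≤ c := by
  rw [traceVia, ENNReal.tsum_eq_iSup_sum]
  refine iSup_le fun F => le_of_tendsto ?_ (h.mono fun a ha => (ENNReal.sum_le_tsum F).trans ha)
  refine tendsto_finsetSum F fun i _ => ENNReal.tendsto_ofReal ?_
  have : Continuous fun R : K →L[ℂ] K => (⟪b i, R (b i)⟫_ℂ).re := by fun_prop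
  exact (this.tendsto X).comp hR

lemma star_mul_mul_sub_eq_sum (T U V : K →L[ℂ] K) (n : ℕ) :
    star U * T * U - star (V ^ n * U) * T * (V ^ n * U)
      = ∑ k ∈ Finset.range n, star (V ^ k * U) * (T - star V * T * V) * (V ^ k * U) := by
  induction n with
  | zero => simp
  | succ n ih =>
    rw [Finset.sum_range_succ, ← ih, pow_succ', mul_assoc V, star_mul V]
    noncomm_ring

-- `T - V* T V ≤ Z` is a Stein (discrete Lyapunov) inequality.
lemma traceVia_star_mul_mul_le_of_stein {T Z U V : K →L[ℂ] K} (hZ : 0 ≤ Z)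
    (hTZ : T - star V * T * V ≤ Z) {q : ℝ} (hq : q < 1) (hVU : ∀ k, ‖V ^ k * U‖ ≤ q ^ k) :
    traceVia b (star U * T * U) ≤ ENNReal.ofReal (1 - q ^ 2)⁻¹ * traceVia b Z := by
  have hq0 : 0 ≤ q := (norm_nonneg _).trans (by simpa using hVU 1)
  have hq2 : q ^ 2 < 1 := by nlinarith
  have hsum : ∀ n, traceVia b (∑ k ∈ Finset.range n, star (V ^ k * U) * Z * (V ^ k * U))
      ≤ ENNReal.ofReal (1 - q ^ 2)⁻¹ * traceVia b Z := by
    intro n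
    rw [traceVia_sum b (fun k => star_left_conjugate_nonneg hZ _)]
    calc ∑ k ∈ Finset.range n, traceVia b (star (V ^ k * U) * Z * (V ^ k * U))
        ≤ ∑ k ∈ Finset.range n, ENNReal.ofReal ((q ^ 2) ^ k) * traceVia b Z := by
          refine Finset.sum_le_sum fun k _ => (traceVia_star_mul_mul_le b hZ _).trans ?_
          gcongr
          rw [← pow_mul, mul_comm, pow_mul]
          exact pow_le_pow_left₀ (norm_nonneg _) (hVU k) 2
      _ = ENNReal.ofReal (∑ k ∈ Finset.range n, (q ^ 2) ^ k) * traceVia b Z := by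
          rw [← Finset.sum_mul, ENNReal.ofReal_sum_of_nonneg fun k _ => by positivity]
      _ ≤ ENNReal.ofReal (1 - q ^ 2)⁻¹ * traceVia b Z := by
          gcongr
          simpa using geom_sum_Ico_le_of_lt_one (m := 0) (n := n) (by positivity) hq2
  have hrest : Tendsto (fun n => star (V ^ n * U) * T * (V ^ n * U)) atTop (𝓝 0) := by
    refine squeeze_zero_norm (fun n => ?_) (by simpa using
      (tendsto_pow_atTop_nhds_zero_of_lt_one (by positivity) hq2).const_mul (‖T‖))
    calc ‖star (V ^ n * U) * T * (V ^ n * U)‖ ≤ ‖V ^ n * U‖ * ‖T‖ * ‖V ^ n * U‖ := by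
          refine (norm_mul_le _ _).trans ?_
          gcongr
          exact (norm_mul_le _ _).trans (by rw [norm_star])
      _ = ‖T‖ * ‖V ^ n * U‖ ^ 2 := by ring
      _ ≤ ‖T‖ * (q ^ 2) ^ n := by
          rw [← pow_mul, mul_comm 2, pow_mul]
          gcongr
          exact hVU n
  have hlim : Tendsto (fun n => star U * T * U - star (V ^ n * U) * T * (V ^ n * U)) atTop
      (𝓝 (star U * T * U)) := by simpa using tendsto_const_nhds.sub hrest
  refine traceVia_le_of_tendsto b hlim
    (Eventually.of_forall fun n => (traceVia_mono b ?_).trans (hsum n))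
  rw [star_mul_mul_sub_eq_sum]
  exact Finset.sum_le_sum fun k _ => star_left_conjugate_le_conjugate hTZ _

end Trace

lemma quarter_polarization {A : Type*} [Ring A] [Algebra ℝ A] {S T U P N : A}
    (hX : S * T + T * S = (2 : ℝ) • (P - N)) :
    (U * S + (4⁻¹ : ℝ) • U) * T * (S * U + (4⁻¹ : ℝ) • U) + U * N * U
      = (U * S - (4⁻¹ : ℝ) • U) * T * (S * U - (4⁻¹ : ℝ) • U) + U * P * U := by
  have h := congrArg (fun X => U * X * U) hX
  simp only [mul_add, add_mul, mul_sub, sub_mul, smul_mul_assoc, mul_smul_comm, mul_assoc] at h ⊢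
  linear_combination (norm := module) (2⁻¹ : ℝ) • h

noncomputable def cutoff (δ t : ℝ) : ℝ := min 1 (max 0 (t / δ - 1))

lemma continuous_cutoff (δ : ℝ) : Continuous (cutoff δ) := by
  unfold cutoff; fun_prop

lemma abs_cutoff_le_one (δ t : ℝ) : |cutoff δ t| ≤ 1 := by
  have : 0 ≤ cutoff δ t := le_min zero_le_one (le_max_left _ _)
  exact abs_le.mpr ⟨by linarith, min_le_left _ _⟩

lemma cutoff_of_le {δ t : ℝ} (hδ : 0 < δ) (ht : t ≤ δ) : cutoff δ t = 0 := by
  have : t / δ - 1 ≤ 0 := by rw [sub_nonpos, div_le_one hδ]; exact ht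
  simp [cutoff, max_eq_left this]

lemma cutoff_of_two_mul_le {δ t : ℝ} (hδ : 0 < δ) (ht : 2 * δ ≤ t) : cutoff δ t = 1 := by
  have : 1 ≤ t / δ - 1 := by rw [le_sub_iff_add_le, le_div_iff₀ hδ]; linarith
  simp [cutoff, max_eq_right (zero_le_one.trans this), this]

lemma abs_sq_cutoff_sub_le {δ : ℝ} (hδ : 0 < δ) (t : ℝ) :
    |(t * cutoff δ t) ^ 2 + (t * cutoff δ (-t)) ^ 2 - t ^ 2| ≤ 4 * δ ^ 2 := by
  have key : ∀ s, 0 ≤ s → |(s * cutoff δ s) ^ 2 - s ^ 2| ≤ 4 * δ ^ 2 := fun s hs => by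
    rcases le_or_gt (2 * δ) s with h | h
    · rw [cutoff_of_two_mul_le hδ h, mul_one, sub_self, abs_zero]; positivity
    · have h1 : cutoff δ s ^ 2 ≤ 1 := (sq_le_one_iff_abs_le_one _).mpr (abs_cutoff_le_one δ s)
      rw [abs_le]
      constructor <;>
        nlinarith [mul_nonneg (sq_nonneg s) (sub_nonneg.2 h1), sq_nonneg (s * cutoff δ s)]
  rcases le_total 0 t with ht | ht
  · simpa [cutoff_of_le hδ (show -t ≤ δ by linarith)] using key t ht
  · simpa [cutoff_of_le hδ (show t ≤ δ by linarith)] using key (-t) (by linarith)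

section PowersStormer

open ContinuousLinearMap Filter Topology

variable {K : Type*} [NormedAddCommGroup K] [InnerProductSpace ℂ K] [CompleteSpace K]
  {ι : Type*} (b : HilbertBasis ι ℂ K) {S : K →L[ℂ] K} {u : ℝ → ℝ}

lemma IsSelfAdjoint.le_norm_of_mem_spectrum (hS : IsSelfAdjoint S) {t : ℝ}
    (ht : t ∈ spectrum ℝ S) : t ≤ ‖S‖ :=
  (le_algebraMap_iff_spectrum_le hS).mp hS.le_algebraMap_norm_self t ht

lemma norm_pow_mul_cfc_le (hS : IsSelfAdjoint S) (hu : Continuous u) (hu1 : ∀ t, |u t| ≤ 1)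
    {δ : ℝ} (hδ : 0 < δ) (hδu : ∀ t ≤ δ, u t = 0) (k : ℕ) :
    ‖(1 - (‖S‖ + δ)⁻¹ • S) ^ k * cfc u S‖ ≤ (‖S‖ / (‖S‖ + δ)) ^ k := by
  have hM : 0 < ‖S‖ + δ := by positivity
  have hV : 1 - (‖S‖ + δ)⁻¹ • S = cfc (fun t => 1 - (‖S‖ + δ)⁻¹ * t) S := by
    rw [cfc_sub _ _ S continuousOn_const (by fun_prop), cfc_const_one ℝ S, cfc_const_mul_id _ S hS]
  rw [hV, ← cfc_pow _ k S, ← cfc_mul _ _ S]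
  refine norm_cfc_le (by positivity) fun t ht => ?_
  rcases le_or_gt t δ with htδ | htδ
  · simp [hδu t htδ, div_nonneg (norm_nonneg S) hM.le]
  have htM := hS.le_norm_of_mem_spectrum ht
  have h0 : 0 ≤ 1 - (‖S‖ + δ)⁻¹ * t := by
    rw [sub_nonneg, inv_mul_le_iff₀ hM]; linarith
  have hq : 1 - (‖S‖ + δ)⁻¹ * t ≤ ‖S‖ / (‖S‖ + δ) := by
    rw [inv_mul_eq_div, one_sub_div hM.ne']
    gcongr
    linarith
  rw [Real.norm_eq_abs, abs_mul, abs_pow, abs_of_nonneg h0]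
  calc (1 - (‖S‖ + δ)⁻¹ * t) ^ k * |u t| ≤ (‖S‖ / (‖S‖ + δ)) ^ k * 1 := by
        gcongr; exact hu1 t
    _ = _ := mul_one _

lemma sub_star_mul_mul_le (hS : IsSelfAdjoint S) {T P N : K →L[ℂ] K} (hT : 0 ≤ T)
    (hN : 0 ≤ N) (hX : S * T + T * S = (2 : ℝ) • (P - N)) {ε : ℝ} (hε : 0 ≤ ε) :
    T - star (1 - ε • S) * T * (1 - ε • S) ≤ (2 * ε) • P := by
  have hV : star (1 - ε • S) = 1 - ε • S := by simp [star_sub, star_smul, hS.star_eq]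
  have h : T - (1 - ε • S) * T * (1 - ε • S)
      = (2 * ε) • P - ((2 * ε) • N + ε ^ 2 • (star S * T * S)) := by
    have : T - (1 - ε • S) * T * (1 - ε • S) = ε • (S * T + T * S) - ε ^ 2 • (S * T * S) := by
      simp only [mul_sub, sub_mul, mul_one, one_mul, smul_mul_assoc, mul_smul_comm, smul_smul,
        smul_sub, smul_add, mul_assoc]
      module
    rw [this, hX, hS.star_eq]
    module
  rw [hV, h]
  exact sub_le_self _ (add_nonneg (smul_nonneg (by positivity) hN)
    (smul_nonneg (by positivity) (star_left_conjugate_nonneg hT S)))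

lemma traceVia_star_cfc_mul_mul_ne_top (hS : IsSelfAdjoint S) {T P N : K →L[ℂ] K}
    (hT : 0 ≤ T) (hP : 0 ≤ P) (hN : 0 ≤ N) (hX : S * T + T * S = (2 : ℝ) • (P - N))
    (hPfin : traceVia b P ≠ ⊤) (hu : Continuous u) (hu1 : ∀ t, |u t| ≤ 1)
    {δ : ℝ} (hδ : 0 < δ) (hδu : ∀ t ≤ δ, u t = 0) :
    traceVia b (star (cfc u S) * T * cfc u S) ≠ ⊤ := by
  have hε : 0 ≤ (‖S‖ + δ)⁻¹ := by positivity
  have hq : ‖S‖ / (‖S‖ + δ) < 1 := (div_lt_one (by positivity)).mpr (by linarith)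
  refine ne_top_of_le_ne_top ?_ (traceVia_star_mul_mul_le_of_stein b
    (smul_nonneg (by positivity) hP) (sub_star_mul_mul_le hS hT hN hX hε) hq
    (norm_pow_mul_cfc_le hS hu hu1 hδ hδu))
  rw [traceVia_smul b P (by positivity)]
  exact ENNReal.mul_ne_top ENNReal.ofReal_ne_top (ENNReal.mul_ne_top ENNReal.ofReal_ne_top hPfin)

lemma cfc_add_const_mul (hS : IsSelfAdjoint S) (hu : Continuous u) (c : ℝ) :
    cfc (fun t => (t + c) * u t) S = S * cfc u S + c • cfc u S := by
  rw [show (fun t => (t + c) * u t) = fun t => t * u t + c * u t by ext; ring,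
    cfc_add (a := S) _ _ (by fun_prop) (by fun_prop), cfc_mul (fun t => t) u S, cfc_id' ℝ S hS,
    cfc_const_mul c u S]

lemma traceVia_polarization (hS : IsSelfAdjoint S) {T P N : K →L[ℂ] K} (hT : 0 ≤ T)
    (hP : 0 ≤ P) (hN : 0 ≤ N) (hX : S * T + T * S = (2 : ℝ) • (P - N)) (hu : Continuous u) :
    traceVia b (star (cfc (fun t => (t + 4⁻¹) * u t) S) * T * cfc (fun t => (t + 4⁻¹) * u t) S)
        + traceVia b (star (cfc u S) * N * cfc u S)
      = traceVia b (star (cfc (fun t => (t - 4⁻¹) * u t) S) * T * cfc (fun t => (t - 4⁻¹) * u t) S)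
        + traceVia b (star (cfc u S) * P * cfc u S) := by
  have hUS : cfc u S * S = S * cfc u S := by
    simpa only [cfc_id' ℝ S hS] using (cfc_commute_cfc u (fun t => t) S).eq
  have hCp := cfc_add_const_mul hS hu 4⁻¹
  have hCm := cfc_add_const_mul hS hu (-4⁻¹)
  simp only [← sub_eq_add_neg, neg_smul] at hCm
  have h := quarter_polarization (U := cfc u S) hX
  rw [← hCp, ← hCm, hUS, ← hCp, ← hCm] at h
  rw [← traceVia_add b (star_left_conjugate_nonneg hT _) (star_left_conjugate_nonneg hN _),
    ← traceVia_add b (star_left_conjugate_nonneg hT _) (star_left_conjugate_nonneg hP _)]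
  simp only [(IsSelfAdjoint.cfc (R := ℝ)).star_eq, h]

-- `u` vanishes where `√t * √t ≠ t`.
lemma sqrt_mul_mul_sqrt_mul (hu0 : ∀ t ≤ 0, u t = 0) (t : ℝ) :
    √t * u t * (√t * u t) = t * u t ^ 2 := by
  rcases le_or_gt t 0 with h | h
  · simp [hu0 t h]
  · rw [mul_mul_mul_comm, Real.mul_self_sqrt h.le]; ring

lemma traceVia_star_cfc_add_quarter {T : K →L[ℂ] K} (hT : 0 ≤ T) (hu : Continuous u)
    (hu0 : ∀ t ≤ 0, u t = 0) :
    traceVia b (star (cfc (fun t => (t + 4⁻¹) * u t) S) * T * cfc (fun t => (t + 4⁻¹) * u t) S)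
      = traceVia b (star (cfc (fun t => (t - 4⁻¹) * u t) S) * T * cfc (fun t => (t - 4⁻¹) * u t) S)
        + traceVia b (star (cfc (fun t => √t * u t) S) * T * cfc (fun t => √t * u t) S) := by
  refine traceVia_star_mul_mul_add b hT ?_
  simp only [(IsSelfAdjoint.cfc (R := ℝ)).star_eq]
  calc cfc (fun t => (t + 4⁻¹) * u t) S * cfc (fun t => (t + 4⁻¹) * u t) S
      = cfc (fun t => (t + 4⁻¹) * u t * ((t + 4⁻¹) * u t)) S := (cfc_mul _ _ S).symm
    _ = cfc (fun t => (t - 4⁻¹) * u t * ((t - 4⁻¹) * u t) + √t * u t * (√t * u t)) S :=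
        cfc_congr fun t _ => by rw [sqrt_mul_mul_sqrt_mul hu0]; ring
    _ = _ := by
        rw [cfc_add (a := S) _ _ (by fun_prop) (by fun_prop),
          cfc_mul (fun t => (t - 4⁻¹) * u t) (fun t => (t - 4⁻¹) * u t) S,
          cfc_mul (fun t => √t * u t) (fun t => √t * u t) S]

lemma cfc_sq_mul_eq_star_mul_mul (hS : IsSelfAdjoint S) (hu : Continuous u)
    (hu0 : ∀ t ≤ 0, u t = 0) :
    cfc (fun t => (t * u t) ^ 2) S
      = star (cfc (fun t => √t * u t) S) * S * cfc (fun t => √t * u t) S := by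
  calc cfc (fun t => (t * u t) ^ 2) S = cfc (fun t => √t * u t * t * (√t * u t)) S :=
        cfc_congr fun t _ => by rw [mul_right_comm, sqrt_mul_mul_sqrt_mul hu0]; ring
    _ = _ := by
        rw [(IsSelfAdjoint.cfc (R := ℝ)).star_eq,
          cfc_mul (fun t => √t * u t * t) (fun t => √t * u t) S,
          cfc_mul (fun t => √t * u t) (fun t => t) S, cfc_id' ℝ S hS]

theorem traceVia_cfc_sq_le (hS : IsSelfAdjoint S) {T P N : K →L[ℂ] K} (hT : 0 ≤ T)
    (hST : S ≤ T) (hP : 0 ≤ P) (hN : 0 ≤ N) (hX : S * T + T * S = (2 : ℝ) • (P - N))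
    (hu : Continuous u) (hu1 : ∀ t, |u t| ≤ 1) {δ : ℝ} (hδ : 0 < δ)
    (hδu : ∀ t ≤ δ, u t = 0) :
    traceVia b (cfc (fun t => (t * u t) ^ 2) S) ≤ traceVia b P := by
  by_cases hPfin : traceVia b P = ⊤
  · simp [hPfin]
  have hu0 : ∀ t ≤ 0, u t = 0 := fun t ht => hδu t (ht.trans hδ.le)
  set U := cfc u S
  set G := cfc (fun t => √t * u t) S
  set Cm := cfc (fun t => (t - 4⁻¹) * u t) S
  have hCmT : traceVia b (star Cm * T * Cm) ≠ ⊤ := by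
    have hCmU : Cm = U * cfc (fun t : ℝ => t - 4⁻¹) S := by
      rw [← cfc_mul u _ S]; exact cfc_congr fun t _ => mul_comm _ _
    rw [hCmU]
    exact ne_top_of_le_ne_top (ENNReal.mul_ne_top ENNReal.ofReal_ne_top
      (traceVia_star_cfc_mul_mul_ne_top b hS hT hP hN hX hPfin hu hu1 hδ hδu))
      (traceVia_star_mul_mul_mul_le b hT _ _)
  have hGU : traceVia b (star G * T * G) ≤ traceVia b (star U * P * U) := by
    have h := traceVia_polarization b hS hT hP hN hX hu
    rw [traceVia_star_cfc_add_quarter b hT hu hu0, add_assoc] at h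
    exact le_self_add.trans ((ENNReal.add_right_inj hCmT).mp h).le
  calc traceVia b (cfc (fun t => (t * u t) ^ 2) S) = traceVia b (star G * S * G) := by
        rw [cfc_sq_mul_eq_star_mul_mul hS hu hu0]
    _ ≤ traceVia b (star G * T * G) := traceVia_mono b (star_left_conjugate_le_conjugate hST G)
    _ ≤ traceVia b (star U * P * U) := hGU
    _ ≤ traceVia b P := traceVia_star_mul_mul_le_of_norm_le_one b hP
        (norm_cfc_le zero_le_one fun t _ => hu1 t)

lemma tendsto_cfc_cutoff (hS : IsSelfAdjoint S) :
    Tendsto (fun δ => cfc (fun t => (t * cutoff δ t) ^ 2 + (t * cutoff δ (-t)) ^ 2) S)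
      (𝓝[>] 0) (𝓝 (S * S)) := by
  have hcont : ∀ δ, Continuous fun t => (t * cutoff δ t) ^ 2 + (t * cutoff δ (-t)) ^ 2 :=
    fun δ => by have := continuous_cutoff δ; fun_prop
  have h4 : Tendsto (fun δ : ℝ => 4 * δ ^ 2) (𝓝[>] 0) (𝓝 0) :=
    ((continuous_const.mul (continuous_pow 2)).tendsto' 0 0 (by simp)).mono_left
      nhdsWithin_le_nhds
  rw [← pow_two, ← cfc_id' ℝ S hS, ← cfc_pow _ 2 S, cfc_id' ℝ S hS,
    tendsto_iff_norm_sub_tendsto_zero]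
  refine squeeze_zero' (Eventually.of_forall fun δ => norm_nonneg _)
    (eventually_mem_nhdsWithin.mono fun δ (hδ : 0 < δ) => ?_) h4
  rw [← cfc_sub _ _ S (hcont δ).continuousOn]
  exact norm_cfc_le (by positivity) fun t _ => abs_sq_cutoff_sub_le hδ t

theorem traceVia_mul_self_le (hS : IsSelfAdjoint S) {T P N : K →L[ℂ] K} (hT : 0 ≤ T)
    (hST : S ≤ T) (hST' : -S ≤ T) (hP : 0 ≤ P) (hN : 0 ≤ N)
    (hX : S * T + T * S = (2 : ℝ) • (P - N)) :
    traceVia b (S * S) ≤ traceVia b P + traceVia b N := by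
  refine traceVia_le_of_tendsto b (tendsto_cfc_cutoff hS)
    (eventually_mem_nhdsWithin.mono fun δ (hδ : 0 < δ) => ?_)
  have hX' : -S * T + T * -S = (2 : ℝ) • (N - P) := by
    rw [neg_mul, mul_neg, ← neg_add, hX, ← smul_neg, neg_sub]
  have hc := continuous_cutoff δ
  have hneg : cfc (fun t => (t * cutoff δ (-t)) ^ 2) S
      = cfc (fun t => (t * cutoff δ t) ^ 2) (-S) := by
    rw [← cfc_comp_neg _ _ (by fun_prop) hS]; exact cfc_congr fun t _ => by ring
  rw [cfc_add (a := S) _ _ (by fun_prop) (by fun_prop),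
    traceVia_add b (cfc_nonneg fun _ _ => by positivity) (cfc_nonneg fun _ _ => by positivity),
    hneg]
  exact add_le_add
    (traceVia_cfc_sq_le b hS hT hST hP hN hX hc (abs_cutoff_le_one δ) hδ
      fun t => cutoff_of_le hδ)
    (traceVia_cfc_sq_le b hS.neg hT hST' hN hP hX' hc (abs_cutoff_le_one δ) hδ
      fun t => cutoff_of_le hδ)

end PowersStormer

theorem stmt0_general {K : Type*} [NormedAddCommGroup K] [InnerProductSpace ℂ K] [CompleteSpace K]
    (A B sA sB D : K →L[ℂ] K)
    (hsA : sA.IsPositive ∧ sA * sA = A)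
    (hsB : sB.IsPositive ∧ sB * sB = B)
    (hD : D.IsPositive ∧ D * D = star (A - B) * (A - B))
    (ι ι' : Type*) (b : HilbertBasis ι ℂ K) (b' : HilbertBasis ι' ℂ K) :
    hsNormSq b (sA - sB) ≤ traceVia b' D := by
  obtain ⟨hsA, rfl⟩ := hsA
  obtain ⟨hsB, rfl⟩ := hsB
  rw [← ContinuousLinearMap.nonneg_iff_isPositive] at hsA hsB
  have hD0 : 0 ≤ D := (ContinuousLinearMap.nonneg_iff_isPositive D).mpr hD.1
  have hX : IsSelfAdjoint (sA * sA - sB * sB) := by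
    simpa only [sq] using
      ((IsSelfAdjoint.of_nonneg hsA).pow 2).sub ((IsSelfAdjoint.of_nonneg hsB).pow 2)
  have hD : D = (sA * sA - sB * sB)⁺ + (sA * sA - sB * sB)⁻ := by
    rw [CFC.posPart_add_negPart _ hX, CFC.abs, ← hD.2, CFC.sqrt_mul_self D hD0]
  have hS : IsSelfAdjoint (sA - sB) := (IsSelfAdjoint.of_nonneg hsA).sub (.of_nonneg hsB)
  rw [← traceVia_star_mul_self, hS.star_eq, traceVia_eq_of_nonneg b' b hD0, hD,
    traceVia_add b (CFC.posPart_nonneg _) (CFC.negPart_nonneg _)]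
  refine traceVia_mul_self_le b hS (add_nonneg hsA hsB) ?_ ?_ (CFC.posPart_nonneg _)
    (CFC.negPart_nonneg _) ?_
  · rw [← sub_nonneg, show sA + sB - (sA - sB) = sB + sB by abel]
    exact add_nonneg hsB hsB
  · rw [← sub_nonneg, show sA + sB - -(sA - sB) = sA + sA by abel]
    exact add_nonneg hsA hsA
  · rw [CFC.posPart_sub_negPart _ hX, two_smul]
    noncomm_ring

/-- For bounded positive operators `A, B` on a complex Hilbert space,
`‖A^{1/2} - B^{1/2}‖₂² ≤ ‖A - B‖₁`, where `sA, sB` are the positive square roots of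
`A, B`, and `D = |A - B|` is the positive operator with `D² = (A-B)*(A-B)`, so that
`traceVia b' D` is the trace norm of `A - B`. -/
theorem stmt0 {K : Type*} [NormedAddCommGroup K] [InnerProductSpace ℂ K] [CompleteSpace K]
    (A B sA sB D : K →L[ℂ] K)
    (hA : A.IsPositive) (hB : B.IsPositive)
    (hsA : sA.IsPositive ∧ sA * sA = A)
    (hsB : sB.IsPositive ∧ sB * sB = B)
    (hD : D.IsPositive ∧ D * D = star (A - B) * (A - B))
    (ι ι' : Type*) (b : HilbertBasis ι ℂ K) (b' : HilbertBasis ι' ℂ K) :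
    hsNormSq b (sA - sB) ≤ traceVia b' D :=
  stmt0_general A B sA sB D hsA hsB hD ι ι' b b'
end

section
/- Let P be an orthogonal projection on a Hilbert space K and let W be an isometry on K whose cokernel has finite dimension M (i.e., dim ker W* = M < ∞). Then (W*PW)^{1/2} - W*PW is a Hilbert-Schmidt operator; in fact ‖(W*PW)^{1/2} - W*PW‖₂² ≤ M. -/
/-!
Put `Q = W*PW` and `S = Q^{1/2}`. Since `0 ≤ S ≤ 1`, we have `(S - Q)² = S² - 2S³ + S⁴ ≤ Q - Q²`,
and `Q - Q² = W*P(1 - WW*)PW`, where `1 - WW*` is the projection onto `ker W*`. Writing it as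
`∑ⱼ |fⱼ⟩⟨fⱼ|` for an orthonormal basis `f₁, …, f_M` of `ker W*` gives
`‖(S - Q)x‖² ≤ ∑ⱼ |⟪W*Pfⱼ, x⟫|²`, and summing over a Hilbert basis (Parseval) yields
`‖S - Q‖₂² ≤ ∑ⱼ ‖W*Pfⱼ‖² ≤ M`.
-/

open scoped ENNReal InnerProductSpace

open RCLike ContinuousLinearMap

theorem CStarRing.norm_le_one_of_norm_star_mul_self_le_one {A : Type*} [NonUnitalNormedRing A]
    [StarRing A] [CStarRing A] {a : A} (h : ‖star a * a‖ ≤ 1) : ‖a‖ ≤ 1 := by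
  rw [CStarRing.norm_star_mul_self] at h
  nlinarith [norm_nonneg a]

section InnerProductSpace

variable {𝕜 E F : Type*} [RCLike 𝕜] [NormedAddCommGroup E] [InnerProductSpace 𝕜 E]
  [NormedAddCommGroup F] [InnerProductSpace 𝕜 F]

theorem IsStarProjection.re_inner_apply_self [CompleteSpace E] {P : E →L[𝕜] E}
    (hP : IsStarProjection P) (y : E) : re ⟪y, P y⟫_𝕜 = ‖P y‖ ^ 2 := by
  have hPy : ⟪P y, P y⟫_𝕜 = ⟪y, P y⟫_𝕜 :=
    (hP.isSelfAdjoint.isSymmetric y (P y)).trans congr(⟪y, $hP.isIdempotentElem.eq y⟫_𝕜)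
  rw [← hPy, inner_self_eq_norm_sq]

theorem HilbertBasis.tsum_ofReal_norm_inner_sq {ι : Type*} (b : HilbertBasis ι 𝕜 E) (v : E) :
    ∑' i, ENNReal.ofReal (‖⟪b i, v⟫_𝕜‖ ^ 2) = ENNReal.ofReal (‖v‖ ^ 2) := by
  have h := lp.hasSum_norm (p := 2) (by norm_num) (b.repr v)
  simp only [b.repr_apply_apply, LinearIsometryEquiv.norm_map, ENNReal.toReal_ofNat,
    Real.rpow_two] at h
  rw [← ENNReal.ofReal_tsum_of_nonneg (fun i => sq_nonneg _) h.summable, h.tsum_eq]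

namespace ContinuousLinearMap

theorem IsPositive.norm_apply_sq_le_re_inner {A : E →L[𝕜] E} (hA : A.IsPositive)
    (hA1 : ‖A‖ ≤ 1) (y : E) : ‖A y‖ ^ 2 ≤ re ⟪y, A y⟫_𝕜 := by
  have hAA : re ⟪A (A y), A y⟫_𝕜 ≤ ‖A y‖ ^ 2 :=
    calc re ⟪A (A y), A y⟫_𝕜 ≤ ‖A (A y)‖ * ‖A y‖ := re_inner_le_norm _ _
      _ ≤ ‖A y‖ * ‖A y‖ := by gcongr; simpa using A.le_of_opNorm_le hA1 (A y)
      _ = ‖A y‖ ^ 2 := by ring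
  have hpos := hA.re_inner_nonneg_left (y - A y)
  rw [map_sub, inner_sub_left, inner_sub_right, inner_sub_right,
    hA.inner_left_eq_inner_right (A y) y, map_sub, map_sub, map_sub, inner_self_eq_norm_sq,
    ← inner_re_symm] at hpos
  linarith

theorem IsPositive.norm_sub_mul_self_apply_sq_le {S : E →L[𝕜] E} (hS : S.IsPositive)
    (hS1 : ‖S‖ ≤ 1) (x : E) :
    ‖(S - S * S) x‖ ^ 2 ≤ re ⟪x, (S * S) x⟫_𝕜 - ‖(S * S) x‖ ^ 2 := by
  change ‖S x - S (S x)‖ ^ 2 ≤ re ⟪x, S (S x)⟫_𝕜 - ‖S (S x)‖ ^ 2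
  have hSx : ‖S x‖ ^ 2 = re ⟪x, S (S x)⟫_𝕜 := by
    rw [← inner_self_eq_norm_sq (𝕜 := 𝕜), hS.inner_left_eq_inner_right]
  have hSSx := hS.norm_apply_sq_le_re_inner hS1 (S x)
  rw [norm_sub_sq (𝕜 := 𝕜), hSx]
  linarith

variable [CompleteSpace E] [CompleteSpace F]

theorem opNorm_le_one_of_adjoint_comp_self {W : E →L[𝕜] F} (hW : adjoint W ∘L W = 1) :
    ‖W‖ ≤ 1 :=
  W.opNorm_le_bound zero_le_one fun x => by
    rw [(norm_map_iff_adjoint_comp_self W).2 hW, one_mul]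

theorem norm_sq_sub_norm_adjoint_apply_sq {W : E →L[𝕜] F} (hW : adjoint W ∘L W = 1)
    {ι : Type*} [Fintype ι] (f : OrthonormalBasis ι 𝕜 (LinearMap.ker (adjoint W).toLinearMap))
    (y : F) : ‖y‖ ^ 2 - ‖adjoint W y‖ ^ 2 = ∑ j, ‖⟪(f j : F), y⟫_𝕜‖ ^ 2 := by
  have hWW (z : E) : adjoint W (W z) = z := congr($hW z)
  set v := y - W (adjoint W y)
  have hv : adjoint W v = 0 := by simp [v, hWW]
  have hnorm : ‖v‖ ^ 2 = ‖y‖ ^ 2 - ‖adjoint W y‖ ^ 2 := by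
    rw [norm_sub_sq (𝕜 := 𝕜), (norm_map_iff_adjoint_comp_self W).2 hW, ← adjoint_inner_left,
      inner_self_eq_norm_sq]
    ring
  have hinner (j : ι) : ⟪(f j : F), v⟫_𝕜 = ⟪(f j : F), y⟫_𝕜 := by
    have hfj : adjoint W (f j : F) = 0 := (f j).2
    rw [inner_sub_right, ← adjoint_inner_left, hfj, inner_zero_left, sub_zero]
  rw [← hnorm]
  simp_rw [← hinner]
  exact (f.sum_sq_norm_inner_right ⟨v, hv⟩).symm

theorem IsPositive.norm_sub_mul_self_apply_sq_le_sum_inner {P : F →L[𝕜] F}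
    (hP : IsStarProjection P) {W : E →L[𝕜] F} (hW : adjoint W ∘L W = 1) {S : E →L[𝕜] E}
    (hS : S.IsPositive) (hSS : S * S = adjoint W ∘L P ∘L W) {ι : Type*} [Fintype ι]
    (f : OrthonormalBasis ι 𝕜 (LinearMap.ker (adjoint W).toLinearMap)) (x : E) :
    ‖(S - S * S) x‖ ^ 2 ≤ ∑ j, ‖⟪adjoint W (P (f j)), x⟫_𝕜‖ ^ 2 := by
  have hW1 := opNorm_le_one_of_adjoint_comp_self hW
  have hS1 : ‖S‖ ≤ 1 := by
    refine CStarRing.norm_le_one_of_norm_star_mul_self_le_one ?_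
    rw [hS.isSelfAdjoint.star_eq, hSS]
    calc ‖adjoint W ∘L P ∘L W‖ ≤ ‖adjoint W‖ * (‖P‖ * ‖W‖) :=
          (opNorm_comp_le _ _).trans (by gcongr; exact opNorm_comp_le _ _)
      _ ≤ 1 := by
          rw [adjoint.norm_map]
          exact mul_le_one₀ hW1 (by positivity) (mul_le_one₀ hP.norm_le (norm_nonneg _) hW1)
  calc ‖(S - S * S) x‖ ^ 2 ≤ re ⟪x, (S * S) x⟫_𝕜 - ‖(S * S) x‖ ^ 2 :=
        hS.norm_sub_mul_self_apply_sq_le hS1 x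
    _ = ‖P (W x)‖ ^ 2 - ‖adjoint W (P (W x))‖ ^ 2 := by
        rw [hSS, comp_apply, comp_apply, adjoint_inner_right, hP.re_inner_apply_self]
    _ = ∑ j, ‖⟪(f j : F), P (W x)⟫_𝕜‖ ^ 2 := norm_sq_sub_norm_adjoint_apply_sq hW f _
    _ = ∑ j, ‖⟪adjoint W (P (f j)), x⟫_𝕜‖ ^ 2 := by
        simp only [adjoint_inner_left]
        congr! 3 with j
        exact (hP.isSelfAdjoint.isSymmetric _ _).symm

end ContinuousLinearMap

end InnerProductSpace

theorem hsNormSq_le_sum_of_norm_apply_sq_le {K : Type*} [NormedAddCommGroup K]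
    [InnerProductSpace ℂ K] {ι κ : Type*} [Fintype κ] (b : HilbertBasis ι ℂ K) {T : K →L[ℂ] K}
    (g : κ → K) (hT : ∀ x, ‖T x‖ ^ 2 ≤ ∑ j, ‖⟪g j, x⟫_ℂ‖ ^ 2) :
    hsNormSq b T ≤ ∑ j, ENNReal.ofReal (‖g j‖ ^ 2) :=
  calc hsNormSq b T ≤ ∑' i, ∑ j, ENNReal.ofReal (‖⟪b i, g j⟫_ℂ‖ ^ 2) := by
        refine ENNReal.tsum_le_tsum fun i => ?_
        rw [← ENNReal.ofReal_sum_of_nonneg fun j _ => sq_nonneg _]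
        simpa only [norm_inner_symm] using ENNReal.ofReal_le_ofReal (hT (b i))
    _ = ∑ j, ENNReal.ofReal (‖g j‖ ^ 2) := by
        rw [Summable.tsum_finsetSum fun j _ => ENNReal.summable]
        simp only [b.tsum_ofReal_norm_inner_sq]

/-- If `P` is an orthogonal projection and `W` an isometry with
`dim ker W* = M < ∞`, then `(W*PW)^{1/2} - W*PW` is Hilbert–Schmidt with
`‖(W*PW)^{1/2} - W*PW‖₂² ≤ M`.  Here `sQ` is the positive square root of `W*PW`
(`star W` is the adjoint of `W`). -/
theorem stmt1 {K : Type*} [NormedAddCommGroup K] [InnerProductSpace ℂ K] [CompleteSpace K]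
    (P W sQ : K →L[ℂ] K)
    (hP : IsSelfAdjoint P ∧ P * P = P)
    (hW : star W * W = 1)
    (M : ℕ)
    (hfin : FiniteDimensional ℂ (LinearMap.ker (star W).toLinearMap))
    (hM : Module.finrank ℂ (LinearMap.ker (star W).toLinearMap) = M)
    (hsQ : sQ.IsPositive ∧ sQ * sQ = star W * P * W)
    (ι : Type*) (b : HilbertBasis ι ℂ K) :
    hsNormSq b (sQ - star W * P * W) ≤ (M : ℝ≥0∞) := by
  obtain ⟨hsQpos, hsQsq⟩ := hsQ
  have hPproj : IsStarProjection P := ⟨hP.2, hP.1⟩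
  let f := stdOrthonormalBasis ℂ (LinearMap.ker (star W).toLinearMap)
  have hWP1 : ‖star W * P‖ ≤ 1 := by
    refine (norm_mul_le _ _).trans (mul_le_one₀ ?_ (norm_nonneg _) hPproj.norm_le)
    rw [norm_star]
    exact opNorm_le_one_of_adjoint_comp_self hW
  have hg (j) : ENNReal.ofReal (‖star W (P (f j))‖ ^ 2) ≤ 1 := by
    have hfj : ‖(f j : K)‖ = 1 := f.orthonormal.1 j
    have := (star W * P).le_of_opNorm_le hWP1 (f j : K)
    rw [hfj, mul_one] at this
    exact ENNReal.ofReal_le_one.2 (pow_le_one₀ (norm_nonneg _) this)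
  calc hsNormSq b (sQ - star W * P * W) = hsNormSq b (sQ - sQ * sQ) := by rw [hsQsq]
    _ ≤ ∑ j, ENNReal.ofReal (‖star W (P (f j))‖ ^ 2) :=
        hsNormSq_le_sum_of_norm_apply_sq_le b _
          (hsQpos.norm_sub_mul_self_apply_sq_le_sum_inner hPproj hW hsQsq f)
    _ ≤ M := (Finset.sum_le_card_nsmul _ _ 1 fun j _ => hg j).trans_eq (by simp [hM])
end

section
/- Let P be an orthogonal projection and W an isometry with finite-dimensional cokernel on a Hilbert space K. Then W*PW - (W*PW)² = W*P(1 - WW*)PW, and this operator is trace class with trace norm at most dim ker W*. -/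
/-!
With `Q = 1 - WW*`, the orthogonal projection onto `ker W*`, the defect `W*PW - (W*PW)²` equals
`C*QC = (QC)*(QC)` for the contraction `C = PW`. Being positive, it is its own absolute value, and
its trace in a Hilbert basis `(bᵢ)` is `∑ᵢ ‖QCbᵢ‖² = ∑ᵢ ∑ⱼ |⟪C*eⱼ, bᵢ⟫|² = ∑ⱼ ‖C*eⱼ‖² ≤ dim ker W*`,
where `(eⱼ)` is an orthonormal basis of `ker W*`.
-/

open scoped ENNReal InnerProductSpace

theorem IsIdempotentElem.mul_mul_sub_mul_self_eq {R : Type*} [Ring R] {p : R}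
    (hp : IsIdempotentElem p) (a b : R) :
    a * p * b - (a * p * b) * (a * p * b) = a * p * (1 - b * a) * p * b := by
  have : a * p * (1 - b * a) * p * b = a * (p * p) * b - (a * p * b) * (a * p * b) := by
    noncomm_ring
  rw [this, hp.eq]

theorem isStarProjection_mul_star_of_star_mul_eq_one {R : Type*} [Monoid R] [StarMul R] {w : R}
    (hw : star w * w = 1) : IsStarProjection (w * star w) where
  isIdempotentElem := by
    rw [IsIdempotentElem, mul_assoc, ← mul_assoc (star w), hw, one_mul]
  isSelfAdjoint := by simp [IsSelfAdjoint, star_mul]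

theorem norm_le_one_of_star_mul_self_eq_one {R : Type*} [NormedRing R] [StarRing R] [CStarRing R]
    {w : R} (hw : star w * w = 1) : ‖w‖ ≤ 1 := by
  have h := (isStarProjection_mul_star_of_star_mul_eq_one hw).norm_le
  rw [CStarRing.norm_self_mul_star] at h
  nlinarith [norm_nonneg w]

theorem IsStarProjection.star_mul_mul_eq {R : Type*} [Semigroup R] [StarMul R] {q : R}
    (hq : IsStarProjection q) (c : R) : star c * q * c = star (q * c) * (q * c) :=
  calc star c * q * c = star c * (q * q) * c := by rw [hq.isIdempotentElem.eq]
    _ = star (q * c) * (q * c) := by rw [star_mul, hq.isSelfAdjoint.star_eq]; simp only [mul_assoc]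

theorem LinearMap.range_one_sub_mul_eq_ker {R M : Type*} [Ring R] [AddCommGroup M] [Module R M]
    {f g : Module.End R M} (h : g * f = 1) : LinearMap.range (1 - f * g) = LinearMap.ker g := by
  ext x
  constructor
  · rintro ⟨y, rfl⟩
    have : g * (1 - f * g) = 0 := by rw [mul_sub, ← mul_assoc, h]; noncomm_ring
    exact LinearMap.congr_fun this y
  · intro hx
    exact ⟨x, by simp_all⟩

theorem HilbertBasis.hasSum_sq_norm_inner {𝕜 E ι : Type*} [RCLike 𝕜] [NormedAddCommGroup E]
    [InnerProductSpace 𝕜 E] (b : HilbertBasis ι 𝕜 E) (x : E) :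
    HasSum (fun i => ‖⟪x, b i⟫_𝕜‖ ^ 2) (‖x‖ ^ 2) := by
  have := (RCLike.hasSum_re 𝕜 (b.hasSum_inner_mul_inner x x))
  rw [inner_self_eq_norm_sq] at this
  convert this using 2 with i
  rw [inner_mul_symm_re_eq_norm, norm_mul, ← inner_conj_symm x, RCLike.norm_conj, sq]

theorem HilbertBasis.tsum_ofReal_sq_norm_inner {𝕜 E ι : Type*} [RCLike 𝕜] [NormedAddCommGroup E]
    [InnerProductSpace 𝕜 E] (b : HilbertBasis ι 𝕜 E) (x : E) :
    ∑' i, ENNReal.ofReal (‖⟪x, b i⟫_𝕜‖ ^ 2) = ENNReal.ofReal (‖x‖ ^ 2) := by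
  have h := b.hasSum_sq_norm_inner x
  rw [← ENNReal.ofReal_tsum_of_nonneg (fun _ => sq_nonneg _) h.summable, h.tsum_eq]

theorem Submodule.sq_norm_starProjection_apply {𝕜 E ι : Type*} [RCLike 𝕜] [NormedAddCommGroup E]
    [InnerProductSpace 𝕜 E] [Fintype ι] {U : Submodule 𝕜 E} [U.HasOrthogonalProjection]
    (e : OrthonormalBasis ι 𝕜 U) (y : E) :
    ‖U.starProjection y‖ ^ 2 = ∑ j, ‖⟪(e j : E), y⟫_𝕜‖ ^ 2 := by
  rw [U.starProjection_apply, Submodule.norm_coe, ← e.sum_sq_norm_inner_right]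
  simp_rw [Submodule.inner_orthogonalProjectionOnto_eq_of_mem_left]

theorem traceVia_star_mul_self_s2 {K ι : Type*} [NormedAddCommGroup K] [InnerProductSpace ℂ K]
    [CompleteSpace K] (b : HilbertBasis ι ℂ K) (A : K →L[ℂ] K) :
    traceVia b (star A * A) = ∑' i, ENNReal.ofReal (‖A (b i)‖ ^ 2) := by
  unfold traceVia
  congr! with i
  rw [mul_apply_eq_comp, ContinuousLinearMap.star_eq_adjoint,
    ContinuousLinearMap.adjoint_inner_right]
  exact inner_self_eq_norm_sq (𝕜 := ℂ) _

theorem traceVia_star_mul_starProjection_mul_le {K ι : Type*} [NormedAddCommGroup K]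
    [InnerProductSpace ℂ K] [CompleteSpace K] (b : HilbertBasis ι ℂ K) (U : Submodule ℂ K)
    [FiniteDimensional ℂ U] {C : K →L[ℂ] K} (hC : ‖C‖ ≤ 1) :
    traceVia b (star C * U.starProjection * C) ≤ Module.finrank ℂ U := by
  set e := stdOrthonormalBasis ℂ U
  calc traceVia b (star C * U.starProjection * C)
      = ∑' i, ∑ j, ENNReal.ofReal (‖⟪star C (e j : K), b i⟫_ℂ‖ ^ 2) := by
        rw [isStarProjection_starProjection.star_mul_mul_eq C, traceVia_star_mul_self_s2]
        congr! with i
        rw [mul_apply_eq_comp, U.sq_norm_starProjection_apply e,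
          ENNReal.ofReal_sum_of_nonneg (fun _ _ => sq_nonneg _)]
        congr! 3 with j
        rw [ContinuousLinearMap.star_eq_adjoint, ContinuousLinearMap.adjoint_inner_left]
    _ = ∑ j, ENNReal.ofReal (‖star C (e j : K)‖ ^ 2) := by
        rw [Summable.tsum_finsetSum (fun _ _ => ENNReal.summable)]
        simp_rw [b.tsum_ofReal_sq_norm_inner]
    _ ≤ ∑ _j, 1 := by
        gcongr with j
        refine ENNReal.ofReal_le_one.mpr (pow_le_one₀ (norm_nonneg _) ?_)
        calc ‖star C (e j : K)‖ ≤ ‖star C‖ * ‖(e j : K)‖ := (star C).le_opNorm _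
          _ ≤ 1 := by rw [norm_star, Submodule.norm_coe, e.orthonormal.1 j, mul_one]; exact hC
    _ = Module.finrank ℂ U := by simp

/-- For an orthogonal projection `P` and an isometry `W` with
finite-dimensional cokernel, `W*PW - (W*PW)² = W*P(1 - WW*)PW`, and this operator is
trace class with trace norm at most `M = dim ker W*`.  Here `E = |W*PW - (W*PW)²|` is
the positive operator whose square is `star T * T` for `T = W*PW - (W*PW)²`, so that
`traceVia b E` is the trace norm of `T`. -/
theorem stmt2 {K : Type*} [NormedAddCommGroup K] [InnerProductSpace ℂ K] [CompleteSpace K]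
    (P W E : K →L[ℂ] K)
    (hP : IsSelfAdjoint P ∧ P * P = P)
    (hW : star W * W = 1)
    (M : ℕ)
    (hfin : FiniteDimensional ℂ (LinearMap.ker (star W).toLinearMap))
    (hM : Module.finrank ℂ (LinearMap.ker (star W).toLinearMap) = M)
    (hE : E.IsPositive ∧
      E * E = star (star W * P * W - (star W * P * W) * (star W * P * W)) *
        (star W * P * W - (star W * P * W) * (star W * P * W))) :
    star W * P * W - (star W * P * W) * (star W * P * W)
      = star W * P * (1 - W * star W) * P * W ∧
    ∀ (ι : Type*) (b : HilbertBasis ι ℂ K), traceVia b E ≤ (M : ℝ≥0∞) := by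
  set V := LinearMap.ker (star W).toLinearMap
  set T := star W * P * W - (star W * P * W) * (star W * P * W)
  have hPproj : IsStarProjection P := ⟨hP.2, hP.1⟩
  have hdefect : T = star W * P * (1 - W * star W) * P * W :=
    hPproj.isIdempotentElem.mul_mul_sub_mul_self_eq (star W) W
  have hQV : 1 - W * star W = V.starProjection :=
    ContinuousLinearMap.IsStarProjection.ext
      (isStarProjection_mul_star_of_star_mul_eq_one hW).one_sub isStarProjection_starProjection
      (by
        rw [V.range_starProjection]
        exact LinearMap.range_one_sub_mul_eq_ker congr(($hW : K →ₗ[ℂ] K)))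
  have hT : T = star (P * W) * V.starProjection * (P * W) := by
    rw [hdefect, hQV, star_mul, hP.1.star_eq]
    simp only [mul_assoc]
  have hT0 : 0 ≤ T := hT ▸ star_left_conjugate_nonneg isStarProjection_starProjection.nonneg _
  have hET : E = T := by
    refine (CFC.mul_self_eq_mul_self_iff E T ((E.nonneg_iff_isPositive).mpr hE.1) hT0).mp ?_
    rw [hE.2, (IsSelfAdjoint.of_nonneg hT0).star_eq]
  have hPW : ‖P * W‖ ≤ 1 := (norm_mul_le _ _).trans
    (mul_le_one₀ hPproj.norm_le (norm_nonneg _) (norm_le_one_of_star_mul_self_eq_one hW))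
  refine ⟨hdefect, fun ι b => ?_⟩
  rw [hET, hT, ← hM]
  exact traceVia_star_mul_starProjection_mul_le b V hPW
end

section
/- Let f be a nonzero function in the Hardy space H² of the unit circle (i.e., f ∈ L²(S¹) with all negative Fourier coefficients vanishing). If f vanishes almost everywhere on some open arc I ⊂ S¹ of positive measure, then f = 0. -/
/-!
The Cauchy transform `F(z) = ∫ f(x) w/(w - z) dx` (with `w` the point of the unit circle
corresponding to `x`) is the power series `∑ₙ f̂(n) zⁿ` inside the unit disc, and equals
`-∑ₙ f̂(-n-1) z^{-n-1}` outside it, so it vanishes there because `f ∈ H²`. Off the closed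
set of circle points carrying `f` the transform is holomorphic, and since `f` vanishes on the
arc `I` this set misses a neighbourhood of `I`. Thus `F` is holomorphic on the union of the
disc with a small ball around a point of `I`; that union is connected and meets the exterior of
the disc, so `F` vanishes on the disc by the identity theorem. Hence every `f̂(n)` vanishes, and
`f = 0` since the characters form a Hilbert basis of `L²`.
-/

open MeasureTheory AddCircle Metric Filter Topology Set FormalMultilinearSeries
open scoped NNReal ComplexConjugate Pointwise

theorem isPreconnected_ball_union_ball {E : Type*} [NormedAddCommGroup E] [NormedSpace ℝ E]
    {x y : E} {r s : ℝ} (hr : 0 < r) (hs : 0 < s) (h : dist x y < r + s) :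
    IsPreconnected (ball x r ∪ ball y s) := by
  obtain ⟨u, hu, v, hv, huv⟩ : y - x ∈ ball (0 : E) r + ball (0 : E) s := by
    rw [ball_add_ball hr hs, add_zero, mem_ball_zero_iff, ← dist_eq_norm, dist_comm]
    exact h
  have hmeet : x + u = y - v := by
    rw [eq_sub_iff_add_eq, add_assoc]
    exact add_eq_of_eq_sub' huv
  refine (convex_ball x r).isPreconnected.union (x + u) ?_ ?_ (convex_ball y s).isPreconnected
  · simpa using hu
  · simpa [hmeet] using hv

theorem eq_zero_of_hasSum_mul_pow {𝕜 : Type*} [NontriviallyNormedField 𝕜] {c : ℕ → 𝕜} {r : ℝ}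
    (hr : 0 < r) (h : ∀ z ∈ ball (0 : 𝕜) r, HasSum (fun n => c n * z ^ n) 0) : c = 0 := by
  obtain ⟨z, hz0, hzr⟩ := NormedField.exists_norm_lt 𝕜 hr
  have hz : z ∈ ball (0 : 𝕜) r := mem_ball_zero_iff.2 hzr
  have hp : HasFPowerSeriesOnBall 0 (ofScalars 𝕜 c) 0 ‖z‖ₑ :=
    { r_le := by
        refine (ofScalars 𝕜 c).le_radius_of_tendsto (r := ‖z‖₊) (l := 0) ?_
        simpa [norm_mul, norm_pow] using (h z hz).summable.tendsto_atTop_zero.norm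
      r_pos := by simpa using hz0
      hasSum := fun {y} hy => by
        have hy' : y ∈ ball (0 : 𝕜) r := by
          rw [mem_eball_zero_iff, ← ofReal_norm, ← ofReal_norm,
            ENNReal.ofReal_lt_ofReal_iff hz0] at hy
          exact mem_ball_zero_iff.2 (hy.trans hzr)
        simpa [ofScalars_apply_eq, smul_eq_mul, mul_comm] using h y hy' }
  exact (ofScalars_series_eq_zero 𝕜).1 hp.hasFPowerSeriesAt.eq_zero

theorem Circle.coe_mul_inv_sub (w : Circle) (z : ℂ) :
    (w : ℂ) * (w - z)⁻¹ = (1 - z * conj (w : ℂ))⁻¹ := by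
  rw [← Circle.coe_inv_eq_conj, Circle.coe_inv,
    show 1 - z * (w : ℂ)⁻¹ = (w - z) * (w : ℂ)⁻¹ by field_simp [w.coe_ne_zero], mul_inv, inv_inv,
    mul_comm]

section Integral

variable {X : Type*} [MeasurableSpace X] {μ : Measure X}

theorem hasSum_integral_mul_pow {𝕜 : Type*} [RCLike 𝕜] {g u : X → 𝕜} (hg : Integrable g μ)
    (hu : AEStronglyMeasurable u μ) {r : ℝ≥0} (hr : r < 1) (hur : ∀ᵐ x ∂μ, ‖u x‖ ≤ r) :
    HasSum (fun n : ℕ => ∫ x, g x * u x ^ n ∂μ) (∫ x, g x * (1 - u x)⁻¹ ∂μ) := by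
  have hpow_le : ∀ n : ℕ, ∀ᵐ x ∂μ, ‖u x ^ n‖ ≤ (r : ℝ) ^ n := fun n => by
    filter_upwards [hur] with x hx
    rw [norm_pow]
    exact pow_le_pow_left₀ (norm_nonneg _) hx n
  have hint : ∀ n : ℕ, Integrable (fun x => g x * u x ^ n) μ := fun n =>
    hg.mul_bdd (hu.pow n) (hpow_le n)
  have hsum : Summable fun n : ℕ => ∫ x, ‖g x * u x ^ n‖ ∂μ := by
    refine Summable.of_nonneg_of_le (fun n => integral_nonneg fun x => norm_nonneg _)
      (fun n => ?_) ((summable_geometric_of_lt_one r.2 hr).mul_left (∫ x, ‖g x‖ ∂μ))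
    rw [← integral_mul_const]
    refine integral_mono_ae (hint n).norm (hg.norm.mul_const _) ?_
    filter_upwards [hpow_le n] with x hx
    rw [norm_mul]
    exact mul_le_mul_of_nonneg_left hx (norm_nonneg _)
  have htsum : ∫ x, ∑' n : ℕ, g x * u x ^ n ∂μ = ∫ x, g x * (1 - u x)⁻¹ ∂μ := by
    refine integral_congr_ae ?_
    filter_upwards [hur] with x hx
    rw [tsum_mul_left, tsum_geometric_of_norm_lt_one (hx.trans_lt hr)]
  exact htsum ▸ hasSum_integral_of_summable_integral_norm hint hsum

theorem hasDerivAt_integral_mul_inv_sub {g a : X → ℂ} (hg : Integrable g μ)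
    (ha : AEStronglyMeasurable a μ) {z₀ : ℂ} {δ : ℝ} (hδ : 0 < δ)
    (hfar : ∀ᵐ x ∂μ, g x ≠ 0 → ∀ z ∈ ball z₀ δ, δ ≤ ‖a x - z‖) :
    HasDerivAt (fun z => ∫ x, g x * (a x - z)⁻¹ ∂μ) (∫ x, g x * ((a x - z₀) ^ 2)⁻¹ ∂μ) z₀ := by
  have hmeas : ∀ z, AEStronglyMeasurable (fun x => g x * (a x - z)⁻¹) μ := fun z =>
    hg.1.mul (ha.sub aestronglyMeasurable_const).aemeasurable.inv.aestronglyMeasurable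
  have hmeas' : AEStronglyMeasurable (fun x => g x * ((a x - z₀) ^ 2)⁻¹) μ :=
    hg.1.mul ((ha.sub aestronglyMeasurable_const).pow 2).aemeasurable.inv.aestronglyMeasurable
  have hint : Integrable (fun x => g x * (a x - z₀)⁻¹) μ := by
    refine (hg.norm.mul_const δ⁻¹).mono' (hmeas z₀) ?_
    filter_upwards [hfar] with x hx
    by_cases hgx : g x = 0
    · simp [hgx]
    rw [norm_mul, norm_inv]
    gcongr
    exact hx hgx z₀ (mem_ball_self hδ)
  have hbound : ∀ᵐ x ∂μ, ∀ z ∈ ball z₀ δ, ‖g x * ((a x - z) ^ 2)⁻¹‖ ≤ ‖g x‖ * (δ ^ 2)⁻¹ := by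
    filter_upwards [hfar] with x hx z hz
    by_cases hgx : g x = 0
    · simp [hgx]
    rw [norm_mul, norm_inv, norm_pow]
    gcongr
    exact hx hgx z hz
  have hderiv : ∀ᵐ x ∂μ, ∀ z ∈ ball z₀ δ,
      HasDerivAt (fun z => g x * (a x - z)⁻¹) (g x * ((a x - z) ^ 2)⁻¹) z := by
    filter_upwards [hfar] with x hx z hz
    by_cases hgx : g x = 0
    · simpa [hgx] using hasDerivAt_const z (0 : ℂ)
    have hne : a x - z ≠ 0 := norm_pos_iff.1 (hδ.trans_le (hx hgx z hz))
    simpa [div_eq_mul_inv] using (((hasDerivAt_id' z).const_sub (a x)).inv hne).const_mul (g x)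
  exact (hasDerivAt_integral_of_dominated_loc_of_deriv_le (ball_mem_nhds z₀ hδ)
    (Eventually.of_forall hmeas) hint hmeas' hbound (hg.norm.mul_const _) hderiv).2

theorem differentiableOn_integral_mul_inv_sub {g a : X → ℂ} (hg : Integrable g μ)
    (ha : AEStronglyMeasurable a μ) {K : Set ℂ} (hK : IsClosed K)
    (hgK : ∀ᵐ x ∂μ, g x ≠ 0 → a x ∈ K) :
    DifferentiableOn ℂ (fun z => ∫ x, g x * (a x - z)⁻¹ ∂μ) Kᶜ := by
  intro z₀ hz₀
  obtain ⟨ε, hε, hball⟩ := Metric.isOpen_iff.1 hK.isOpen_compl z₀ hz₀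
  refine (hasDerivAt_integral_mul_inv_sub hg ha (half_pos hε) ?_).differentiableAt
    |>.differentiableWithinAt
  filter_upwards [hgK] with x hx hgx z hz
  have hax : ε ≤ dist (a x) z₀ := by
    by_contra! h
    exact hball (mem_ball.2 h) (hx hgx)
  have := dist_triangle (a x) z z₀
  rw [mem_ball] at hz
  rw [← dist_eq_norm]
  linarith

end Integral

namespace AddCircle

variable {T : ℝ}

theorem fourier_natCast_apply (n : ℕ) (x : AddCircle T) :
    fourier n x = (toCircle x : ℂ) ^ n := by
  rw [fourier_apply, natCast_zsmul, toCircle_nsmul, Circle.coe_pow]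

theorem continuous_coe_toCircle : Continuous fun x : AddCircle T => (toCircle x : ℂ) :=
  continuous_subtype_val.comp continuous_toCircle

variable [Fact (0 < T)]

noncomputable def cauchyTransform (f : AddCircle T → ℂ) (z : ℂ) : ℂ :=
  ∫ x, f x * toCircle x * (toCircle x - z)⁻¹ ∂haarAddCircle

theorem integral_mul_toCircle_pow (f : AddCircle T → ℂ) (n : ℕ) :
    ∫ x, f x * (toCircle x : ℂ) ^ n ∂haarAddCircle = fourierCoeff f (-n) := by
  simp_rw [fourierCoeff, neg_neg, fourier_natCast_apply, smul_eq_mul, mul_comm]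

theorem integral_mul_conj_toCircle_pow (f : AddCircle T → ℂ) (n : ℕ) :
    ∫ x, f x * conj (toCircle x : ℂ) ^ n ∂haarAddCircle = fourierCoeff f n := by
  simp_rw [fourierCoeff, fourier_neg, ← map_pow, fourier_natCast_apply, smul_eq_mul, mul_comm]

theorem hasSum_fourierCoeff_mul_pow {f : AddCircle T → ℂ} (hf : Integrable f haarAddCircle)
    {z : ℂ} (hz : ‖z‖ < 1) :
    HasSum (fun n : ℕ => fourierCoeff f n * z ^ n) (cauchyTransform f z) := by
  have hu : AEStronglyMeasurable (fun x : AddCircle T => z * conj (toCircle x : ℂ))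
      haarAddCircle :=
    (continuous_const.mul
      (Complex.continuous_conj.comp continuous_coe_toCircle)).aestronglyMeasurable
  have h := hasSum_integral_mul_pow hf hu (r := ‖z‖₊) (mod_cast hz)
    (Eventually.of_forall fun x => by simp [Circle.norm_coe])
  have hkernel : ∀ x : AddCircle T,
      f x * toCircle x * (toCircle x - z)⁻¹ = f x * (1 - z * conj (toCircle x : ℂ))⁻¹ := by
    intro x
    rw [mul_assoc, Circle.coe_mul_inv_sub]
  simp_rw [mul_pow, ← mul_assoc, mul_right_comm _ (z ^ _), integral_mul_const,
    integral_mul_conj_toCircle_pow] at h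
  simpa only [cauchyTransform, hkernel] using h

theorem cauchyTransform_eq_zero_of_one_lt_norm {f : AddCircle T → ℂ}
    (hf : Integrable f haarAddCircle) (hHardy : ∀ n : ℤ, n < 0 → fourierCoeff f n = 0)
    {z : ℂ} (hz : 1 < ‖z‖) : cauchyTransform f z = 0 := by
  have hz₀ : z ≠ 0 := norm_pos_iff.1 (one_pos.trans hz)
  have hu : AEStronglyMeasurable (fun x : AddCircle T => z⁻¹ * (toCircle x : ℂ)) haarAddCircle :=
    (continuous_const.mul continuous_coe_toCircle).aestronglyMeasurable
  have hg : Integrable (fun x : AddCircle T => -(f x * (z⁻¹ * toCircle x))) haarAddCircle :=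
    (hf.mul_bdd hu (c := ‖z⁻¹‖) (Eventually.of_forall fun x => by simp [Circle.norm_coe])).neg
  have h := hasSum_integral_mul_pow hg hu (r := ‖z⁻¹‖₊)
    (by rw [nnnorm_inv]; exact inv_lt_one_of_one_lt₀ (mod_cast hz))
    (Eventually.of_forall fun x => by simp [Circle.norm_coe])
  have hkernel : ∀ x : AddCircle T, f x * toCircle x * (toCircle x - z)⁻¹ =
      -(f x * (z⁻¹ * toCircle x)) * (1 - z⁻¹ * toCircle x)⁻¹ := by
    intro x
    rw [show 1 - z⁻¹ * toCircle x = -(toCircle x - z) * z⁻¹ by field_simp; ring, mul_inv, inv_inv,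
      inv_neg]
    field_simp
  have hterm : ∀ n : ℕ,
      ∫ x, -(f x * (z⁻¹ * toCircle x)) * (z⁻¹ * toCircle x) ^ n ∂haarAddCircle = 0 := by
    intro n
    have : ∀ x : AddCircle T, -(f x * (z⁻¹ * toCircle x)) * (z⁻¹ * toCircle x) ^ n =
        -(f x * (toCircle x : ℂ) ^ (n + 1) * z⁻¹ ^ (n + 1)) := fun x => by ring
    simp_rw [this, integral_neg, integral_mul_const, integral_mul_toCircle_pow]
    rw [hHardy _ (by omega), zero_mul, neg_zero]
  simp_rw [hterm] at h
  simpa only [cauchyTransform, hkernel] using h.unique hasSum_zero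

theorem differentiableOn_cauchyTransform {f : AddCircle T → ℂ} (hf : Integrable f haarAddCircle)
    {K : Set ℂ} (hK : IsClosed K) (hfK : ∀ᵐ x ∂haarAddCircle, f x ≠ 0 → (toCircle x : ℂ) ∈ K) :
    DifferentiableOn ℂ (cauchyTransform f) Kᶜ := by
  have hg : Integrable (fun x : AddCircle T => f x * toCircle x) haarAddCircle :=
    hf.mul_bdd continuous_coe_toCircle.aestronglyMeasurable (c := 1)
      (Eventually.of_forall fun x => (Circle.norm_coe _).le)
  refine differentiableOn_integral_mul_inv_sub hg continuous_coe_toCircle.aestronglyMeasurable hK ?_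
  filter_upwards [hfK] with x hx hfx
  exact hx (left_ne_zero_of_mul hfx)

theorem cauchyTransform_eqOn_ball_zero {f : AddCircle T → ℂ} (hf : Integrable f haarAddCircle)
    (hHardy : ∀ n : ℤ, n < 0 → fourierCoeff f n = 0) {I : Set (AddCircle T)} (hI : IsOpen I)
    (hIne : I.Nonempty) (hvanish : ∀ᵐ x ∂haarAddCircle, x ∈ I → f x = 0) :
    EqOn (cauchyTransform f) 0 (ball 0 1) := by
  obtain ⟨p, hp⟩ := hIne
  set w : ℂ := (toCircle p : ℂ)
  set K : Set ℂ := (fun x => (toCircle x : ℂ)) '' Iᶜ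
  have hKcl : IsClosed K := (hI.isClosed_compl.isCompact.image continuous_coe_toCircle).isClosed
  have hwK : w ∉ K := by
    rintro ⟨q, hq, hqp⟩
    exact hq (injective_toCircle (Fact.out : 0 < T).ne' (Circle.coe_injective hqp) ▸ hp)
  obtain ⟨ε, hε, hballK⟩ := Metric.isOpen_iff.1 hKcl.isOpen_compl w hwK
  have hdiscK : ball 0 1 ⊆ Kᶜ := by
    rintro z hz ⟨x, -, rfl⟩
    simp [Circle.norm_coe] at hz
  have hana : AnalyticOnNhd ℂ (cauchyTransform f) (ball 0 1 ∪ ball w ε) := by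
    refine (DifferentiableOn.analyticOnNhd ?_ hKcl.isOpen_compl).mono (union_subset hdiscK hballK)
    refine differentiableOn_cauchyTransform hf hKcl ?_
    filter_upwards [hvanish] with x hx hfx
    exact ⟨x, fun hxI => hfx (hx hxI), rfl⟩
  have hconn : IsPreconnected (ball 0 1 ∪ ball w ε) :=
    isPreconnected_ball_union_ball one_pos hε (by simpa [Circle.norm_coe, w] using hε)
  set z₁ : ℂ := (1 + ε / 2 : ℝ) • w
  have hz₁ : z₁ ∈ ball w ε := by
    rw [mem_ball, dist_eq_norm, show z₁ - w = (ε / 2 : ℝ) • w by simp [z₁, add_smul],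
      norm_smul, Circle.norm_coe, mul_one, Real.norm_of_nonneg (by positivity)]
    linarith
  have hz₁_norm : 1 < ‖z₁‖ := by
    rw [norm_smul, Circle.norm_coe, mul_one, Real.norm_of_nonneg (by positivity)]
    linarith
  have hext : cauchyTransform f =ᶠ[𝓝 z₁] 0 :=
    eventually_of_mem ((isOpen_lt continuous_const continuous_norm).mem_nhds hz₁_norm)
      fun z hz => cauchyTransform_eq_zero_of_one_lt_norm hf hHardy hz
  exact (hana.eqOn_zero_of_preconnected_of_eventuallyEq_zero hconn (Or.inr hz₁) hext).mono
    subset_union_left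

theorem fourierCoeff_natCast_eq_zero {f : AddCircle T → ℂ} (hf : Integrable f haarAddCircle)
    (h : EqOn (cauchyTransform f) 0 (ball 0 1)) (n : ℕ) : fourierCoeff f n = 0 :=
  congrFun (eq_zero_of_hasSum_mul_pow one_pos fun _ hz =>
    h hz ▸ hasSum_fourierCoeff_mul_pow hf (mem_ball_zero_iff.1 hz)) n

theorem ae_eq_zero_of_fourierCoeff_eq_zero {f : AddCircle T → ℂ} (hf : MemLp f 2 haarAddCircle)
    (h : ∀ n, fourierCoeff f n = 0) : f =ᵐ[haarAddCircle] 0 := by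
  have hrepr : fourierBasis.repr (hf.toLp f) = 0 := by
    ext n
    rw [fourierBasis_repr, fourierCoeff_congr_ae hf.coeFn_toLp, h]
    rfl
  have hzero : hf.toLp f = 0 := by simpa using hrepr
  exact hf.coeFn_toLp.symm.trans (Lp.eq_zero_iff_ae_eq_zero.1 hzero)

end AddCircle

/-- Let `f ∈ L²(S¹)` be a Hardy space function (all negative Fourier
coefficients vanish).  If `f` vanishes a.e. on an open arc of positive measure, then
`f = 0` (a.e.). -/
theorem stmt3 [hT : Fact (0 < 2 * Real.pi)]
    (f : AddCircle (2 * Real.pi) → ℂ)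
    (hf : MemLp f 2 (haarAddCircle))
    (hHardy : ∀ n : ℤ, n < 0 → fourierCoeff f n = 0)
    (I : Set (AddCircle (2 * Real.pi)))
    (hIopen : IsOpen I)
    (hIpos : 0 < haarAddCircle I)
    (hvanish : ∀ᵐ x ∂(haarAddCircle), x ∈ I → f x = 0) :
    ∀ᵐ x ∂(haarAddCircle : Measure (AddCircle (2 * Real.pi))), f x = 0 := by
  have hfi : Integrable f haarAddCircle := hf.integrable (by norm_num)
  have hdisc := cauchyTransform_eqOn_ball_zero hfi hHardy hIopen
    (nonempty_of_measure_ne_zero hIpos.ne') hvanish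
  refine ae_eq_zero_of_fourierCoeff_eq_zero hf fun n => ?_
  obtain hn | hn := lt_or_ge n 0
  · exact hHardy n hn
  · lift n to ℕ using hn
    exact fourierCoeff_natCast_eq_zero hfi hdisc n
end

section
/- With K = L²(S¹;ℂᴺ), integer basis {eₙⁱ} and half-integer basis {eᵣⁱ}, the Bogoliubov operator V_{1/2} = Σᵢ ( 2^{-1/2}|e_{1/2}ⁱ⟩⟨e₀ⁱ| + 2^{-1/2}|e_{-1/2}ⁱ⟩⟨e₀ⁱ| + Σ_{n≥1} (|e_{n+1/2}ⁱ⟩⟨eₙⁱ| + |e_{-n-1/2}ⁱ⟩⟨e_{-n}ⁱ|) ) is an isometry commuting with Γ, satisfies V_{1/2}* P_NS V_{1/2} = S_R, and has dim ker V_{1/2}* = N. -/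
open scoped InnerProductSpace

lemma hb_ext_inner {K : Type*} [NormedAddCommGroup K] [InnerProductSpace ℂ K] {ι : Type*}
    (b : HilbertBasis ι ℂ K) {x y : K}
    (h : ∀ p, ⟪b p, x⟫_ℂ = ⟪b p, y⟫_ℂ) : x = y := by
  apply b.repr.injective
  apply lp.ext
  funext p
  rw [b.repr_apply_apply, b.repr_apply_apply]
  exact h p


/-- Let `K = L²(S¹;ℂᴺ)` with integer Fourier basis `e (n,i) ↔ eₙⁱ` and
half-integer basis `f (n,i) ↔ e_{n+1/2}ⁱ` (abstractly: two Hilbert bases indexed by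
`ℤ × Fin N`), and let `Γ` be componentwise complex conjugation, so `Γ e(n,i) = e(-n,i)`
and `Γ f(n,i) = f(-n-1,i)`.  Let `P = P_NS` be the Neveu–Schwarz projection,
`P f(n,i) = f(n,i)` for `n < 0` and `0` otherwise, and let `S = S_R` be the Ramond
operator on the integer basis.  The Bogoliubov operator
`V_{1/2} = Σᵢ (2^{-1/2}|e_{1/2}ⁱ⟩⟨e₀ⁱ| + 2^{-1/2}|e_{-1/2}ⁱ⟩⟨e₀ⁱ|
            + Σ_{n≥1}(|e_{n+1/2}ⁱ⟩⟨eₙⁱ| + |e_{-n-1/2}ⁱ⟩⟨e_{-n}ⁱ|))`,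
i.e. `V e(n,i) = f(n,i)` for `n > 0`, `V e(0,i) = 2^{-1/2}(f(0,i) + f(-1,i))`,
`V e(n,i) = f(n-1,i)` for `n < 0`, is an isometry commuting with `Γ`, satisfies
`V* P_NS V = S_R`, and `dim ker V* = N`. -/
theorem stmt13 {K : Type*} [NormedAddCommGroup K] [InnerProductSpace ℂ K] [CompleteSpace K]
    (N : ℕ)
    (e f : HilbertBasis (ℤ × Fin N) ℂ K)
    (Γ : K →ₗ⋆[ℂ] K)
    (hΓinv : ∀ x, Γ (Γ x) = x)
    (hΓanti : ∀ x y, ⟪Γ x, Γ y⟫_ℂ = ⟪y, x⟫_ℂ)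
    (hΓe : ∀ (n : ℤ) (i : Fin N), Γ (e (n, i)) = e (-n, i))
    (hΓf : ∀ (n : ℤ) (i : Fin N), Γ (f (n, i)) = f (-n - 1, i))
    (P : K →L[ℂ] K)
    (hP : ∀ (n : ℤ) (i : Fin N),
      P (f (n, i)) = if n < 0 then f (n, i) else 0)
    (S : K →L[ℂ] K)
    (hS : ∀ (n : ℤ) (i : Fin N),
      S (e (n, i)) = (if n < 0 then (1 : ℂ) else if n = 0 then 2⁻¹ else 0) • e (n, i))
    (V : K →L[ℂ] K)
    (hV : ∀ (n : ℤ) (i : Fin N),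
      V (e (n, i)) =
        if 0 < n then f (n, i)
        else if n = 0 then ((Real.sqrt 2 : ℝ) : ℂ)⁻¹ • (f (0, i) + f (-1, i))
        else f (n - 1, i)) :
    star V * V = 1 ∧
    (∀ x, V (Γ x) = Γ (V x)) ∧
    star V * P * V = S ∧
    Module.finrank ℂ (LinearMap.ker (star V).toLinearMap) = N := by
  have hfo : ∀ a b : ℤ × Fin N, ⟪f a, f b⟫_ℂ = if a = b then 1 else 0 :=
    orthonormal_iff_ite.mp f.orthonormal
  have heo : ∀ a b : ℤ × Fin N, ⟪e a, e b⟫_ℂ = if a = b then 1 else 0 :=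
    orthonormal_iff_ite.mp e.orthonormal
  set c : ℂ := ((Real.sqrt 2 : ℝ) : ℂ)⁻¹ with hc
  have hcconj : starRingEnd ℂ c = c := by
    rw [hc, map_inv₀, Complex.conj_ofReal]
  have hc2 : c * c = 2⁻¹ := by
    rw [hc, ← mul_inv, ← Complex.ofReal_mul, Real.mul_self_sqrt (by norm_num : (0:ℝ) ≤ 2)]
    norm_num
  have hcne : c ≠ 0 := by
    rw [hc]
    simp [Real.sqrt_eq_zero']
  have hadj : ∀ (x y : K), ⟪x, (star V) y⟫_ℂ = ⟪V x, y⟫_ℂ := by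
    intro x y
    rw [ContinuousLinearMap.star_eq_adjoint, ContinuousLinearMap.adjoint_inner_right]
  have hVpos : ∀ (n : ℤ) (i : Fin N), 0 < n → V (e (n, i)) = f (n, i) := by
    intro n i h; rw [hV, if_pos h]
  have hVzero : ∀ i : Fin N, V (e (0, i)) = c • (f (0, i) + f (-1, i)) := by
    intro i; rw [hV, if_neg (by omega), if_pos rfl]
  have hVneg : ∀ (n : ℤ) (i : Fin N), n < 0 → V (e (n, i)) = f (n - 1, i) := by
    intro n i h; rw [hV, if_neg (by omega), if_neg (by omega)]
  have hne : ∀ (a b : ℤ) (j i : Fin N), a ≠ b → ⟪f (a, j), f (b, i)⟫_ℂ = 0 := by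
    intro a b j i h
    rw [hfo, if_neg]
    rintro hh
    rw [Prod.mk.injEq] at hh
    exact h hh.1
  have heqf : ∀ (a : ℤ) (j i : Fin N), ⟪f (a, j), f (a, i)⟫_ℂ = if j = i then 1 else 0 := by
    intro a j i
    rw [hfo]
    simp [Prod.ext_iff]
  -- the key isometry computation
  have key : ∀ (m n : ℤ) (j i : Fin N),
      ⟪V (e (m, j)), V (e (n, i))⟫_ℂ = if ((m, j) : ℤ × Fin N) = (n, i) then 1 else 0 := by
    intro m n j i
    rcases eq_or_ne m n with rfl | hmn
    · have hip : (if ((m, j) : ℤ × Fin N) = (m, i) then (1:ℂ) else 0) = if j = i then 1 else 0 := by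
        simp [Prod.ext_iff]
      rw [hip]
      rcases lt_trichotomy m 0 with hm | rfl | hm
      · rw [hVneg m j hm, hVneg m i hm, heqf]
      · rw [hVzero j, hVzero i, inner_smul_left, inner_smul_right, inner_add_left,
          inner_add_right, inner_add_right, heqf 0 j i, heqf (-1) j i,
          hne 0 (-1) j i (by omega), hne (-1) 0 j i (by omega), hcconj]
        split_ifs
        · simp only [add_zero, zero_add]
          rw [← mul_assoc, hc2]
          norm_num
        · ring
      · rw [hVpos m j hm, hVpos m i hm, heqf]
    · rw [if_neg (by rintro hh; rw [Prod.mk.injEq] at hh; exact hmn hh.1)]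
      rcases lt_trichotomy m 0 with hm | rfl | hm <;> rcases lt_trichotomy n 0 with hn | rfl | hn
      · rw [hVneg m j hm, hVneg n i hn, hne (m-1) (n-1) j i (by omega)]
      · rw [hVneg m j hm, hVzero i, inner_smul_right, inner_add_right,
          hne (m-1) 0 j i (by omega), hne (m-1) (-1) j i (by omega)]
        ring
      · rw [hVneg m j hm, hVpos n i hn, hne (m-1) n j i (by omega)]
      · rw [hVzero j, hVneg n i hn, inner_smul_left, inner_add_left,
          hne 0 (n-1) j i (by omega), hne (-1) (n-1) j i (by omega)]
        ring
      · exact absurd rfl hmn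
      · rw [hVzero j, hVpos n i hn, inner_smul_left, inner_add_left,
          hne 0 n j i (by omega), hne (-1) n j i (by omega)]
        ring
      · rw [hVpos m j hm, hVneg n i hn, hne m (n-1) j i (by omega)]
      · rw [hVpos m j hm, hVzero i, inner_smul_right, inner_add_right,
          hne m 0 j i (by omega), hne m (-1) j i (by omega)]
        ring
      · rw [hVpos m j hm, hVpos n i hn, hne m n j i (by omega)]
  have hdense : Dense (↑(Submodule.span ℂ (Set.range ⇑e)) : Set K) := by
    rw [Submodule.dense_iff_topologicalClosure_eq_top]
    exact e.dense_span
  -- Part 1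
  have part1 : star V * V = 1 := by
    apply ContinuousLinearMap.ext_on hdense
    rintro _ ⟨⟨n, i⟩, rfl⟩
    apply hb_ext_inner e
    rintro ⟨m, j⟩
    rw [ContinuousLinearMap.mul_apply, hadj, key, ContinuousLinearMap.one_apply, heo]
  -- Part 2
  have hΓiso : Isometry Γ := by
    apply AddMonoidHomClass.isometry_of_norm
    intro x
    rw [@norm_eq_sqrt_re_inner ℂ, @norm_eq_sqrt_re_inner ℂ, hΓanti]
  have part2 : ∀ x, V (Γ x) = Γ (V x) := by
    have hbasis : ∀ (n : ℤ) (i : Fin N), V (Γ (e (n, i))) = Γ (V (e (n, i))) := by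
      intro n i
      rw [hΓe]
      rcases lt_trichotomy n 0 with hn | rfl | hn
      · rw [hVpos (-n) i (by omega), hVneg n i hn, hΓf (n-1) i]
        have : -(n - 1) - 1 = -n := by omega
        rw [this]
      · rw [neg_zero, hVzero i, map_smulₛₗ, map_add, hΓf 0 i, hΓf (-1) i, hcconj]
        have e1 : (-(0:ℤ) - 1) = -1 := by norm_num
        have e2 : (-(-1:ℤ) - 1) = 0 := by norm_num
        rw [e1, e2, add_comm]
      · rw [hVneg (-n) i (by omega), hVpos n i hn, hΓf n i]
    have hspan : ∀ y ∈ Submodule.span ℂ (Set.range ⇑e), V (Γ y) = Γ (V y) := by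
      intro y hy
      induction hy using Submodule.span_induction with
      | mem z hz => obtain ⟨⟨n, i⟩, rfl⟩ := hz; exact hbasis n i
      | zero => simp
      | add u v hu hv ihu ihv => simp only [map_add, ihu, ihv]
      | smul a z hz ih => simp only [map_smulₛₗ, map_smul, RingHom.id_apply, ih]
    have hfun : (fun x => V (Γ x)) = fun x => Γ (V x) :=
      Continuous.ext_on hdense (V.continuous.comp hΓiso.continuous)
        (hΓiso.continuous.comp V.continuous) (fun y hy => hspan y hy)
    exact fun x => congrFun hfun x
  -- Part 3
  have hPV : ∀ (n : ℤ) (i : Fin N), P (V (e (n, i))) =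
      if n < 0 then f (n - 1, i) else if n = 0 then c • f (-1, i) else 0 := by
    intro n i
    rcases lt_trichotomy n 0 with hn | rfl | hn
    · rw [hVneg n i hn, hP (n-1) i, if_pos (by omega), if_pos hn]
    · rw [hVzero i, map_smul, map_add, hP 0 i, hP (-1) i, if_neg (by omega),
        if_pos (by omega), zero_add, if_neg (by omega), if_pos rfl]
    · rw [hVpos n i hn, hP n i, if_neg (by omega), if_neg (by omega), if_neg (by omega)]
  have part3 : star V * P * V = S := by
    apply ContinuousLinearMap.ext_on hdense
    rintro _ ⟨⟨n, i⟩, rfl⟩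
    apply hb_ext_inner e
    rintro ⟨m, j⟩
    rw [ContinuousLinearMap.mul_apply, ContinuousLinearMap.mul_apply, hadj, hPV, hS,
      inner_smul_right, heo]
    rcases lt_trichotomy n 0 with hn | rfl | hn
    · rw [if_pos hn, if_pos hn]
      rcases lt_trichotomy m 0 with hm | rfl | hm
      · rw [hVneg m j hm, hfo,
          show (if ((m - 1, j) : ℤ × Fin N) = (n - 1, i) then (1:ℂ) else 0) =
              (if ((m, j) : ℤ × Fin N) = (n, i) then 1 else 0) from
            if_congr (by simp only [Prod.mk.injEq]; exact ⟨fun h => ⟨by omega, h.2⟩, fun h => ⟨by omega, h.2⟩⟩) rfl rfl]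
        ring
      · rw [hVzero j, inner_smul_left, inner_add_left, hne 0 (n-1) j i (by omega),
          hne (-1) (n-1) j i (by omega),
          if_neg (by rintro hh; rw [Prod.mk.injEq] at hh; omega)]
        ring
      · rw [hVpos m j hm, hne m (n-1) j i (by omega),
          if_neg (by rintro hh; rw [Prod.mk.injEq] at hh; omega)]
        ring
    · rw [if_neg (by omega), if_pos rfl, if_neg (by omega), if_pos rfl, inner_smul_right]
      rcases lt_trichotomy m 0 with hm | rfl | hm
      · rw [hVneg m j hm, hne (m-1) (-1) j i (by omega),
          if_neg (by rintro hh; rw [Prod.mk.injEq] at hh; omega)]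
        ring
      · rw [hVzero j, inner_smul_left, inner_add_left, hne 0 (-1) j i (by omega),
          heqf (-1) j i, hcconj]
        rw [show (if ((0, j) : ℤ × Fin N) = ((0:ℤ), i) then (1:ℂ) else 0) =
              (if j = i then 1 else 0) from if_congr (by simp [Prod.ext_iff]) rfl rfl]
        split_ifs
        · linear_combination hc2
        · ring
      · rw [hVpos m j hm, hne m (-1) j i (by omega),
          if_neg (by rintro hh; rw [Prod.mk.injEq] at hh; omega)]
        ring
    · rw [if_neg (by omega), if_neg (by omega), if_neg (by omega), if_neg (by omega),
        inner_zero_right]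
      ring
  -- Part 4
  have part4 : Module.finrank ℂ (LinearMap.ker (star V).toLinearMap) = N := by
    set g : Fin N → K := fun i => f (0, i) - f (-1, i) with hg
    have hgg : ∀ i j : Fin N, ⟪g i, g j⟫_ℂ = if i = j then 2 else 0 := by
      intro i j
      simp only [hg, inner_sub_left, inner_sub_right, heqf 0 i j, heqf (-1) i j,
        hne 0 (-1) i j (by omega), hne (-1) 0 i j (by omega)]
      split_ifs <;> ring
    have hgli : LinearIndependent ℂ g := by
      rw [Fintype.linearIndependent_iff]
      intro coef hsum i
      have h0 : ⟪g i, ∑ j, coef j • g j⟫_ℂ = 0 := by rw [hsum, inner_zero_right]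
      rw [inner_sum] at h0
      simp only [inner_smul_right, hgg, mul_ite, mul_zero] at h0
      rw [Finset.sum_ite_eq Finset.univ i (fun j => coef j * 2)] at h0
      simp at h0
      exact h0
    have hker : LinearMap.ker (star V).toLinearMap = Submodule.span ℂ (Set.range g) := by
      apply le_antisymm
      · intro x hx
        rw [LinearMap.mem_ker] at hx
        have hx0 : (star V) x = 0 := hx
        have hx' : ∀ (n : ℤ) (i : Fin N), ⟪V (e (n, i)), x⟫_ℂ = 0 := by
          intro n i
          rw [← hadj, hx0, inner_zero_right]
        have h1 : ∀ (n : ℤ) (i : Fin N), 0 < n → ⟪f (n, i), x⟫_ℂ = 0 := by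
          intro n i hn
          have h := hx' n i
          rwa [hVpos n i hn] at h
        have h2 : ∀ (n : ℤ) (i : Fin N), n < -1 → ⟪f (n, i), x⟫_ℂ = 0 := by
          intro n i hn
          have h := hx' (n + 1) i
          rw [hVneg (n + 1) i (by omega), show n + 1 - 1 = n from by omega] at h
          exact h
        have h3 : ∀ i : Fin N, ⟪f (-1, i), x⟫_ℂ = -⟪f (0, i), x⟫_ℂ := by
          intro i
          have h := hx' 0 i
          rw [hVzero i, inner_smul_left, inner_add_left, hcconj] at h
          have h4 := (mul_eq_zero.mp h).resolve_left hcne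
          linear_combination h4
        have hxeq : x = ∑ i : Fin N, ⟪f (0, i), x⟫_ℂ • g i := by
          apply hb_ext_inner f
          rintro ⟨m, j⟩
          rw [inner_sum]
          simp only [inner_smul_right, hg, inner_sub_right, hfo]
          rcases lt_trichotomy m (-1) with hm | rfl | hm
          · rw [h2 _ _ hm, Finset.sum_eq_zero]
            intro i _
            rw [if_neg (show ¬ ((m, j) : ℤ × Fin N) = (0, i) from
                by rintro hh; rw [Prod.mk.injEq] at hh; omega),
              if_neg (show ¬ ((m, j) : ℤ × Fin N) = (-1, i) from
                by rintro hh; rw [Prod.mk.injEq] at hh; omega)]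
            ring
          · rw [h3 j]
            have hterm : ∀ i : Fin N, ⟪f (0, i), x⟫_ℂ *
                ((if ((-1, j) : ℤ × Fin N) = (0, i) then (1:ℂ) else 0) -
                 (if ((-1, j) : ℤ × Fin N) = (-1, i) then 1 else 0)) =
                if j = i then -⟪f (0, i), x⟫_ℂ else 0 := by
              intro i
              rw [if_neg (show ¬ ((-1, j) : ℤ × Fin N) = (0, i) from
                by rintro hh; rw [Prod.mk.injEq] at hh; omega)]
              by_cases hji : j = i
              · rw [if_pos (show ((-1, j) : ℤ × Fin N) = (-1, i) from by rw [hji]), if_pos hji]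
                ring
              · rw [if_neg (show ¬ ((-1, j) : ℤ × Fin N) = (-1, i) from
                  by rintro hh; rw [Prod.mk.injEq] at hh; exact hji hh.2), if_neg hji]
                ring
            rw [Finset.sum_congr rfl (fun i _ => hterm i), Finset.sum_ite_eq Finset.univ j]
            simp
          · rcases eq_or_lt_of_le (by omega : (0:ℤ) ≤ m) with rfl | hm0
            · have hterm : ∀ i : Fin N, ⟪f (0, i), x⟫_ℂ *
                  ((if ((0, j) : ℤ × Fin N) = (0, i) then (1:ℂ) else 0) -
                   (if ((0, j) : ℤ × Fin N) = (-1, i) then 1 else 0)) =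
                  if j = i then ⟪f (0, i), x⟫_ℂ else 0 := by
                intro i
                rw [if_neg (show ¬ ((0, j) : ℤ × Fin N) = (-1, i) from
                  by rintro hh; rw [Prod.mk.injEq] at hh; omega)]
                by_cases hji : j = i
                · rw [if_pos (show ((0, j) : ℤ × Fin N) = (0, i) from by rw [hji]), if_pos hji]
                  ring
                · rw [if_neg (show ¬ ((0, j) : ℤ × Fin N) = (0, i) from
                    by rintro hh; rw [Prod.mk.injEq] at hh; exact hji hh.2), if_neg hji]
                  ring
              rw [Finset.sum_congr rfl (fun i _ => hterm i), Finset.sum_ite_eq Finset.univ j]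
              simp
            · rw [h1 _ _ hm0, Finset.sum_eq_zero]
              intro i _
              rw [if_neg (show ¬ ((m, j) : ℤ × Fin N) = (0, i) from
                  by rintro hh; rw [Prod.mk.injEq] at hh; omega),
                if_neg (show ¬ ((m, j) : ℤ × Fin N) = (-1, i) from
                  by rintro hh; rw [Prod.mk.injEq] at hh; omega)]
              ring
        rw [hxeq]
        exact Submodule.sum_mem _ (fun i _ =>
          Submodule.smul_mem _ _ (Submodule.subset_span ⟨i, rfl⟩))
      · rw [Submodule.span_le]
        rintro _ ⟨i, rfl⟩
        rw [SetLike.mem_coe, LinearMap.mem_ker]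
        show (star V) (g i) = 0
        apply hb_ext_inner e
        rintro ⟨m, j⟩
        rw [inner_zero_right, hadj, hg]
        simp only [inner_sub_right]
        rcases lt_trichotomy m 0 with hm | rfl | hm
        · rw [hVneg m j hm, hne (m-1) 0 j i (by omega), hne (m-1) (-1) j i (by omega)]
          ring
        · rw [hVzero j, inner_smul_left, inner_smul_left, inner_add_left, inner_add_left,
            heqf 0 j i, heqf (-1) j i, hne 0 (-1) j i (by omega), hne (-1) 0 j i (by omega)]
          ring
        · rw [hVpos m j hm, hne m 0 j i (by omega), hne m (-1) j i (by omega)]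
          ring
    rw [hker, finrank_span_eq_card hgli, Fintype.card_fin]
  exact ⟨part1, part2, part3, part4⟩
end

section
/- Let π be a representation of a unital C*-algebra A on a Hilbert space H, let Ω ∈ H, and suppose {Xₙ} ⊂ π(A) is a bounded sequence with a weak limit point Z that commutes with π(A), where π is irreducible. Then Z = λ·1 with λ = lim of ⟨Ω|XₙΩ⟩ along the subnet; and if λ ≠ 0 and Y Xₙ ∈ S for all n for a weakly closed subspace S ⊂ B(H), then Y ∈ S. -/
open scoped InnerProductSpace

/-- Let `π` be an irreducible representation of a unital C*-algebra `A`
on `H` (irreducibility expressed by triviality of the commutant), `Ω` a unit vector,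
`(Xₙ)` a sequence of contractions in `π(A)` with a weak-operator limit point `Z`
(along a subnet given by a nontrivial filter `l` and an index map `φ`) commuting with
`π(A)`.  Then `Z = λ·1` where `λ` is the limit of `⟪Ω, XₙΩ⟫` along the subnet; and if
`λ ≠ 0` and `Y·Xₙ ∈ S` for all `n`, for a weak-operator-closed subspace `S` of `B(H)`,
then `Y ∈ S`. -/
theorem stmt16 {A : Type*} {H : Type*}
    [NormedAddCommGroup H] [InnerProductSpace ℂ H] [CompleteSpace H]
    [NormedRing A] [StarRing A] [CStarRing A] [NormedAlgebra ℂ A] [NormOneClass A]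
    (π : A →⋆ₐ[ℂ] (H →L[ℂ] H))
    (hirr : ∀ T : H →L[ℂ] H, (∀ a, Commute T (π a)) → ∃ c : ℂ, T = c • (1 : H →L[ℂ] H))
    (Ω : H) (hΩ : ‖Ω‖ = 1)
    (X : ℕ → H →L[ℂ] H) (hXmem : ∀ n, ∃ a, X n = π a) (hX : ∀ n, ‖X n‖ ≤ 1)
    {ι' : Type*} (l : Filter ι') [l.NeBot] (φ : ι' → ℕ)
    (Z : H →L[ℂ] H)
    (hZlim : ∀ x y : H,
      Filter.Tendsto (fun j => ⟪x, X (φ j) y⟫_ℂ) l (nhds ⟪x, Z y⟫_ℂ))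
    (hZcomm : ∀ a, Commute Z (π a))
    (S : Set (H →L[ℂ] H))
    (hSsmul : ∀ (c : ℂ), ∀ T ∈ S, c • T ∈ S)
    (hSadd : ∀ T ∈ S, ∀ T' ∈ S, T + T' ∈ S)
    (hSclosed : ∀ (g : ι' → H →L[ℂ] H) (T : H →L[ℂ] H), (∀ j, g j ∈ S) →
      (∀ x y : H, Filter.Tendsto (fun j => ⟪x, g j y⟫_ℂ) l (nhds ⟪x, T y⟫_ℂ)) → T ∈ S)
    (Y : H →L[ℂ] H) (hYX : ∀ n, Y * X n ∈ S) :
    ∃ lam : ℂ, Z = lam • (1 : H →L[ℂ] H) ∧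
      Filter.Tendsto (fun j => ⟪Ω, X (φ j) Ω⟫_ℂ) l (nhds lam) ∧
      (lam ≠ 0 → Y ∈ S) := by
  obtain ⟨c, hc⟩ := hirr Z hZcomm
  refine ⟨c, hc, ?_, ?_⟩
  · have := hZlim Ω Ω
    have hZΩ : ⟪Ω, Z Ω⟫_ℂ = c := by
      rw [hc]
      simp [inner_smul_right, @inner_self_eq_norm_sq_to_K ℂ, hΩ]
    rwa [hZΩ] at this
  · intro hcne
    have hYZ : (Y * Z) ∈ S := by
      refine hSclosed (fun j => Y * X (φ j)) (Y * Z) (fun j => hYX (φ j)) ?_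
      intro x y
      have h := hZlim ((ContinuousLinearMap.adjoint Y) x) y
      simpa [ContinuousLinearMap.adjoint_inner_left, ContinuousLinearMap.mul_apply] using h
    have : Y = c⁻¹ • (Y * Z) := by
      rw [hc]
      ext v
      simp [smul_smul, inv_mul_cancel₀ hcne]
    rw [this]
    exact hSsmul _ _ hYZ
end
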